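/- arXiv:2302.08982 — 6 statements merged into one kernel-verified Lean document; each statement's English description precedes it below -/
import Mathlib

section
/- Suppose that for every k ≥ 0 we have ‖γ_k ∇L_{B_k}(β_k)‖_∞ < 1. Then the SGD iterates β_k = ½(w_{+,k}² − w_{−,k}²) follow a stochastic mirror descent recursion with time-varying potentials: for all k ≥ 0, ∇h_{k+1}(β_{k+1}) = ∇h_k(β_k) − γ_k ∇L_{B_k}(β_k), where coordinatewise ∇h_k(β) = ½ arcsinh(β/α_k²) − φ_k; equivalently, ∇h_k(β_k) = −Σ_{ℓ<k} γ_ℓ ∇L_{B_ℓ}(β_ℓ) for all k ≥ 0. -/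
open Finset Filter Real

noncomputable section

/-- Dot product on `Fin d → ℝ`. -/
def dotp {d : ℕ} (u v : Fin d → ℝ) : ℝ := ∑ j, u j * v j

/-- Batch loss `L_B(β) = (1/(2|B|)) ∑_{i∈B} (⟨x_i,β⟩ − y_i)²`. -/
def batchLoss {d n : ℕ} (x : Fin n → Fin d → ℝ) (y : Fin n → ℝ)
    (B : Finset (Fin n)) (β : Fin d → ℝ) : ℝ :=
  (1 / (2 * (B.card : ℝ))) * ∑ i ∈ B, (dotp (x i) β - y i) ^ 2

/-- Gradient of the batch loss. -/
def gradBatch {d n : ℕ} (x : Fin n → Fin d → ℝ) (y : Fin n → ℝ)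
    (B : Finset (Fin n)) (β : Fin d → ℝ) : Fin d → ℝ :=
  fun j => (1 / (B.card : ℝ)) * ∑ i ∈ B, (dotp (x i) β - y i) * x i j

/-- SGD on the `(w₊, w₋)` parametrisation of the diagonal linear network. -/
def Witer {d n : ℕ} (x : Fin n → Fin d → ℝ) (y : Fin n → ℝ) (α : Fin d → ℝ)
    (γ : ℕ → ℝ) (Bk : ℕ → Finset (Fin n)) : ℕ → (Fin d → ℝ) × (Fin d → ℝ)
  | 0 => (α, α)
  | k + 1 =>
      let w := Witer x y α γ Bk k
      let β : Fin d → ℝ := fun j => ((w.1 j) ^ 2 - (w.2 j) ^ 2) / 2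
      let g := gradBatch x y (Bk k) β
      (fun j => (1 - γ k * g j) * w.1 j, fun j => (1 + γ k * g j) * w.2 j)

/-- The prediction iterates `β_k = ½(w_{+,k}² − w_{−,k}²)`. -/
def betaIter {d n : ℕ} (x : Fin n → Fin d → ℝ) (y : Fin n → ℝ) (α : Fin d → ℝ)
    (γ : ℕ → ℝ) (Bk : ℕ → Finset (Fin n)) (k : ℕ) : Fin d → ℝ :=
  fun j => ((Witer x y α γ Bk k).1 j ^ 2 - (Witer x y α γ Bk k).2 j ^ 2) / 2

/-- The stochastic gradient `∇L_{B_k}(β_k)` used at step `k`. -/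
def gIter {d n : ℕ} (x : Fin n → Fin d → ℝ) (y : Fin n → ℝ) (α : Fin d → ℝ)
    (γ : ℕ → ℝ) (Bk : ℕ → Finset (Fin n)) (k : ℕ) : Fin d → ℝ :=
  gradBatch x y (Bk k) (betaIter x y α γ Bk k)

def qplus (t : ℝ) : ℝ := -2 * t - Real.log ((1 - t) ^ 2)

def qminus (t : ℝ) : ℝ := 2 * t - Real.log ((1 + t) ^ 2)

def qfun (t : ℝ) : ℝ := -(1 / 2) * Real.log ((1 - t ^ 2) ^ 2)

/-- `α_{+,k}²` coordinatewise. -/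
def alphaPlusSq {d n : ℕ} (x : Fin n → Fin d → ℝ) (y : Fin n → ℝ) (α : Fin d → ℝ)
    (γ : ℕ → ℝ) (Bk : ℕ → Finset (Fin n)) (k : ℕ) : Fin d → ℝ :=
  fun j => (α j) ^ 2 * Real.exp (-(∑ ℓ ∈ Finset.range k, qplus (γ ℓ * gIter x y α γ Bk ℓ j)))

/-- `α_{−,k}²` coordinatewise. -/
def alphaMinusSq {d n : ℕ} (x : Fin n → Fin d → ℝ) (y : Fin n → ℝ) (α : Fin d → ℝ)
    (γ : ℕ → ℝ) (Bk : ℕ → Finset (Fin n)) (k : ℕ) : Fin d → ℝ :=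
  fun j => (α j) ^ 2 * Real.exp (-(∑ ℓ ∈ Finset.range k, qminus (γ ℓ * gIter x y α γ Bk ℓ j)))

/-- `α_k² = α_{+,k} ⊙ α_{−,k}` coordinatewise. -/
def alphaSq {d n : ℕ} (x : Fin n → Fin d → ℝ) (y : Fin n → ℝ) (α : Fin d → ℝ)
    (γ : ℕ → ℝ) (Bk : ℕ → Finset (Fin n)) (k : ℕ) : Fin d → ℝ :=
  fun j => Real.sqrt (alphaPlusSq x y α γ Bk k j * alphaMinusSq x y α γ Bk k j)

/-- `φ_k = ½ arcsinh((α_{+,k}² − α_{−,k}²)/(2α_k²))`. -/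
def phiK {d n : ℕ} (x : Fin n → Fin d → ℝ) (y : Fin n → ℝ) (α : Fin d → ℝ)
    (γ : ℕ → ℝ) (Bk : ℕ → Finset (Fin n)) (k : ℕ) : Fin d → ℝ :=
  fun j => (1 / 2) * Real.arsinh ((alphaPlusSq x y α γ Bk k j - alphaMinusSq x y α γ Bk k j) /
    (2 * alphaSq x y α γ Bk k j))

/-- Hyperbolic entropy `ψ_a`, expressed in terms of the squared scale `aSq = a²`. -/
def psiSq {d : ℕ} (aSq : Fin d → ℝ) (β : Fin d → ℝ) : ℝ :=
  (1 / 2) * ∑ j, (β j * Real.arsinh (β j / aSq j) - Real.sqrt ((β j) ^ 2 + (aSq j) ^ 2) + aSq j)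

/-- The time-varying potential `h_k(β) = ψ_{α_k}(β) − ⟨φ_k, β⟩`. -/
def hK {d n : ℕ} (x : Fin n → Fin d → ℝ) (y : Fin n → ℝ) (α : Fin d → ℝ)
    (γ : ℕ → ℝ) (Bk : ℕ → Finset (Fin n)) (k : ℕ) (β : Fin d → ℝ) : ℝ :=
  psiSq (alphaSq x y α γ Bk k) β - dotp (phiK x y α γ Bk k) β

/-- The gradient of `h_k`: `∇h_k(β) = ½ arcsinh(β/α_k²) − φ_k` coordinatewise. -/
def gradHK {d n : ℕ} (x : Fin n → Fin d → ℝ) (y : Fin n → ℝ) (α : Fin d → ℝ)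
    (γ : ℕ → ℝ) (Bk : ℕ → Finset (Fin n)) (k : ℕ) (β : Fin d → ℝ) : Fin d → ℝ :=
  fun j => (1 / 2) * Real.arsinh (β j / alphaSq x y α γ Bk k j) - phiK x y α γ Bk k j

/-- Bregman divergence of `h_k`. -/
def DhK {d n : ℕ} (x : Fin n → Fin d → ℝ) (y : Fin n → ℝ) (α : Fin d → ℝ)
    (γ : ℕ → ℝ) (Bk : ℕ → Finset (Fin n)) (k : ℕ) (β β' : Fin d → ℝ) : ℝ :=
  hK x y α γ Bk k β - hK x y α γ Bk k β' -
    dotp (gradHK x y α γ Bk k β') (fun j => β j - β' j)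

/-- Euclidean norm on `Fin d → ℝ`. -/
def norm2 {d : ℕ} (v : Fin d → ℝ) : ℝ := Real.sqrt (∑ j, v j ^ 2)

/-- ℓ¹ norm on `Fin d → ℝ`. -/
def l1norm {d : ℕ} (v : Fin d → ℝ) : ℝ := ∑ j, |v j|

/-- `H_B β = (1/|B|) ∑_{i∈B} ⟨x_i, β⟩ x_i`. -/
def HBop {d n : ℕ} (x : Fin n → Fin d → ℝ) (B : Finset (Fin n)) (β : Fin d → ℝ) : Fin d → ℝ :=
  fun j => (1 / (B.card : ℝ)) * ∑ i ∈ B, dotp (x i) β * x i j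



lemma my_sqrt_eq_exp_half_log {A : ℝ} (hA : 0 < A) : Real.sqrt A = Real.exp (Real.log A / 2) := by
  have h2 : Real.exp (Real.log A / 2) ^ 2 = A := by
    rw [sq, ← Real.exp_add, add_halves, Real.exp_log hA]
  calc Real.sqrt A = Real.sqrt (Real.exp (Real.log A / 2) ^ 2) := by rw [h2]
    _ = Real.exp (Real.log A / 2) := Real.sqrt_sq (Real.exp_pos _).le

lemma my_frac_helper (a b u v : ℝ) (ha : 0 < a) (hb : 0 < b) :
    (Real.sqrt a / Real.sqrt b * u - Real.sqrt b / Real.sqrt a * v) / 2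
      = (a * u - b * v) / 2 / (Real.sqrt a * Real.sqrt b) := by
  have ha2 : Real.sqrt a ^ 2 = a := Real.sq_sqrt ha.le
  have hb2 : Real.sqrt b ^ 2 = b := Real.sq_sqrt hb.le
  have hsa : (0:ℝ) < Real.sqrt a := Real.sqrt_pos.2 ha
  have hsb : (0:ℝ) < Real.sqrt b := Real.sqrt_pos.2 hb
  field_simp
  linear_combination u*ha2 - v*hb2

lemma my_key (A B S : ℝ) (hA : 0 < A) (hB : 0 < B) :
    (1/2) * Real.arsinh ((A * Real.exp (-(2*S)) - B * Real.exp (2*S)) / 2 / Real.sqrt (A*B))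
      - (1/2) * Real.arsinh ((A - B) / (2 * Real.sqrt (A*B))) = -S := by
  set c : ℝ := (Real.log A - Real.log B) / 2 with hc
  have hsA : Real.sqrt A = Real.exp (Real.log A / 2) := my_sqrt_eq_exp_half_log hA
  have hsB : Real.sqrt B = Real.exp (Real.log B / 2) := my_sqrt_eq_exp_half_log hB
  have hAB : Real.sqrt (A*B) = Real.sqrt A * Real.sqrt B := Real.sqrt_mul hA.le B
  have hec : Real.exp c = Real.sqrt A / Real.sqrt B := by
    rw [hc, hsA, hsB, ← Real.exp_sub]; ring_nf
  have hecn : Real.exp (-c) = Real.sqrt B / Real.sqrt A := by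
    rw [show -c = (Real.log B - Real.log A)/2 by rw [hc]; ring, hsA, hsB, ← Real.exp_sub]
    ring_nf
  have e1 : (A * Real.exp (-(2*S)) - B * Real.exp (2*S)) / 2 / Real.sqrt (A*B)
      = Real.sinh (c - 2*S) := by
    rw [Real.sinh_eq, show c - 2*S = c + -(2*S) by ring, show -(c + -(2*S)) = -c + 2*S by ring,
      Real.exp_add, Real.exp_add, hec, hecn, hAB, my_frac_helper A B _ _ hA hB]
  have e2 : (A - B) / (2 * Real.sqrt (A*B)) = Real.sinh c := by
    have := my_frac_helper A B 1 1 hA hB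
    simp only [mul_one] at this
    rw [Real.sinh_eq, hec, hecn, hAB, this]
    ring
  rw [e1, e2, Real.arsinh_sinh, Real.arsinh_sinh]
  ring

lemma my_wsq {d n : ℕ} (x : Fin n → Fin d → ℝ) (y : Fin n → ℝ) (α : Fin d → ℝ)
    (γ : ℕ → ℝ) (Bk : ℕ → Finset (Fin n)) (k : ℕ) (j : Fin d) :
    ((Witer x y α γ Bk k).1 j) ^ 2
        = α j ^ 2 * ∏ ℓ ∈ Finset.range k, (1 - γ ℓ * gIter x y α γ Bk ℓ j) ^ 2 ∧
    ((Witer x y α γ Bk k).2 j) ^ 2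
        = α j ^ 2 * ∏ ℓ ∈ Finset.range k, (1 + γ ℓ * gIter x y α γ Bk ℓ j) ^ 2 := by
  induction k with
  | zero => simp [Witer]
  | succ k ih =>
    have h1 : (Witer x y α γ Bk (k+1)).1 j
        = (1 - γ k * gIter x y α γ Bk k j) * (Witer x y α γ Bk k).1 j := rfl
    have h2 : (Witer x y α γ Bk (k+1)).2 j
        = (1 + γ k * gIter x y α γ Bk k j) * (Witer x y α γ Bk k).2 j := rfl
    constructor
    · rw [h1, mul_pow, ih.1, Finset.prod_range_succ]; ring
    · rw [h2, mul_pow, ih.2, Finset.prod_range_succ]; ring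

lemma my_AB_eq {d n : ℕ} (x : Fin n → Fin d → ℝ) (y : Fin n → ℝ) (α : Fin d → ℝ)
    (γ : ℕ → ℝ) (Bk : ℕ → Finset (Fin n))
    (hstep : ∀ k j, |γ k * gIter x y α γ Bk k j| < 1) (k : ℕ) (j : Fin d) :
    alphaPlusSq x y α γ Bk k j
        = Real.exp (2 * ∑ ℓ ∈ Finset.range k, γ ℓ * gIter x y α γ Bk ℓ j)
          * ((Witer x y α γ Bk k).1 j) ^ 2 ∧
    alphaMinusSq x y α γ Bk k j
        = Real.exp (-(2 * ∑ ℓ ∈ Finset.range k, γ ℓ * gIter x y α γ Bk ℓ j))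
          * ((Witer x y α γ Bk k).2 j) ^ 2 := by
  have habs : ∀ ℓ, -1 < γ ℓ * gIter x y α γ Bk ℓ j ∧ γ ℓ * gIter x y α γ Bk ℓ j < 1 :=
    fun ℓ => abs_lt.1 (hstep ℓ j)
  have hp : ∀ ℓ ∈ Finset.range k, (0:ℝ) < (1 - γ ℓ * gIter x y α γ Bk ℓ j) ^ 2 := by
    intro ℓ _; have := (habs ℓ).2; nlinarith
  have hm : ∀ ℓ ∈ Finset.range k, (0:ℝ) < (1 + γ ℓ * gIter x y α γ Bk ℓ j) ^ 2 := by
    intro ℓ _; have := (habs ℓ).1; nlinarith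
  constructor
  · have : -(∑ ℓ ∈ Finset.range k, qplus (γ ℓ * gIter x y α γ Bk ℓ j))
        = (2 * ∑ ℓ ∈ Finset.range k, γ ℓ * gIter x y α γ Bk ℓ j)
          + ∑ ℓ ∈ Finset.range k, Real.log ((1 - γ ℓ * gIter x y α γ Bk ℓ j) ^ 2) := by
      simp only [qplus, neg_mul, Finset.sum_sub_distrib, Finset.sum_neg_distrib, Finset.mul_sum]
      ring
    rw [alphaPlusSq, this, Real.exp_add, Real.exp_sum, (my_wsq x y α γ Bk k j).1]
    rw [Finset.prod_congr rfl fun ℓ hℓ => Real.exp_log (hp ℓ hℓ)]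
    ring
  · have : -(∑ ℓ ∈ Finset.range k, qminus (γ ℓ * gIter x y α γ Bk ℓ j))
        = (-(2 * ∑ ℓ ∈ Finset.range k, γ ℓ * gIter x y α γ Bk ℓ j))
          + ∑ ℓ ∈ Finset.range k, Real.log ((1 + γ ℓ * gIter x y α γ Bk ℓ j) ^ 2) := by
      simp only [qminus, Finset.sum_sub_distrib, Finset.mul_sum]
      ring
    rw [alphaMinusSq, this, Real.exp_add, Real.exp_sum, (my_wsq x y α γ Bk k j).2]
    rw [Finset.prod_congr rfl fun ℓ hℓ => Real.exp_log (hm ℓ hℓ)]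
    ring


/-- the SGD iterates over the diagonal linear network follow a stochastic mirror
descent recursion with the time-varying potentials `h_k`, whose gradients are
`∇h_k(β) = ½ arcsinh(β/α_k²) − φ_k`; equivalently `∇h_k(β_k) = −∑_{ℓ<k} γ_ℓ ∇L_{B_ℓ}(β_ℓ)`. -/
theorem stmt0 (d n : ℕ) (x : Fin n → Fin d → ℝ) (y : Fin n → ℝ)
    (α : Fin d → ℝ) (hα : ∀ j, 0 < α j)
    (γ : ℕ → ℝ) (hγ : ∀ k, 0 ≤ γ k)
    (Bk : ℕ → Finset (Fin n)) (hBk : ∀ k, (Bk k).Nonempty)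
    (hstep : ∀ k j, |γ k * gIter x y α γ Bk k j| < 1) :
    (∀ k, gradHK x y α γ Bk (k + 1) (betaIter x y α γ Bk (k + 1)) =
      fun j => gradHK x y α γ Bk k (betaIter x y α γ Bk k) j - γ k * gIter x y α γ Bk k j) ∧
    (∀ k, gradHK x y α γ Bk k (betaIter x y α γ Bk k) =
      fun j => -(∑ ℓ ∈ Finset.range k, γ ℓ * gIter x y α γ Bk ℓ j)) := by
  have main : ∀ k, gradHK x y α γ Bk k (betaIter x y α γ Bk k) =
      fun j => -(∑ ℓ ∈ Finset.range k, γ ℓ * gIter x y α γ Bk ℓ j) := by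
    intro k
    funext j
    set S := ∑ ℓ ∈ Finset.range k, γ ℓ * gIter x y α γ Bk ℓ j with hS
    have hA : 0 < alphaPlusSq x y α γ Bk k j := by
      have := (hα j).ne'
      unfold alphaPlusSq
      positivity
    have hB : 0 < alphaMinusSq x y α γ Bk k j := by
      have := (hα j).ne'
      unfold alphaMinusSq
      positivity
    have hAB := my_AB_eq x y α γ Bk hstep k j
    have e1 : alphaPlusSq x y α γ Bk k j * Real.exp (-(2*S))
        = ((Witer x y α γ Bk k).1 j) ^ 2 := by
      calc alphaPlusSq x y α γ Bk k j * Real.exp (-(2*S))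
          = Real.exp (2*S) * Real.exp (-(2*S)) * ((Witer x y α γ Bk k).1 j) ^ 2 := by
            rw [hAB.1]; ring
        _ = _ := by rw [← Real.exp_add]; simp
    have e2 : alphaMinusSq x y α γ Bk k j * Real.exp (2*S)
        = ((Witer x y α γ Bk k).2 j) ^ 2 := by
      calc alphaMinusSq x y α γ Bk k j * Real.exp (2*S)
          = Real.exp (-(2*S)) * Real.exp (2*S) * ((Witer x y α γ Bk k).2 j) ^ 2 := by
            rw [hAB.2]; ring
        _ = _ := by rw [← Real.exp_add]; simp
    have hbeta : betaIter x y α γ Bk k j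
        = (alphaPlusSq x y α γ Bk k j * Real.exp (-(2*S))
            - alphaMinusSq x y α γ Bk k j * Real.exp (2*S)) / 2 := by
      rw [e1, e2]; rfl
    simp only [gradHK, phiK, alphaSq]
    rw [hbeta]
    exact my_key _ _ _ hA hB
  refine ⟨fun k => ?_, main⟩
  funext j
  rw [congrFun (main (k+1)) j, congrFun (main k) j, Finset.sum_range_succ]
  ring

end
end

section
/- Suppose ‖γ_k ∇L_{B_k}(β_k)‖_∞ < 1 for all k ≥ 0, and assume that: β_k converges to some β*_∞ ∈ S; α_k converges coordinatewise to some α_∞ ∈ ℝ^d with positive entries; and φ_k converges to some φ_∞ ∈ ℝ^d. Then β*_∞ is the unique minimiser over S of the function β ↦ D_{ψ_{α_∞}}(β, β̃₀), where β̃₀ = α_∞² ⊙ sinh(2φ_∞) coordinatewise (so that ∇ψ_{α_∞}(β̃₀) = φ_∞). -/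
open Finset Filter Real

noncomputable section

/-- Bregman divergence of the hyperbolic entropy `ψ` with squared scales `aSq`,
using the explicit gradient `∇ψ(β')_j = ½ arcsinh(β'_j / aSq_j)`. -/
def DpsiSq {d : ℕ} (aSq : Fin d → ℝ) (β β' : Fin d → ℝ) : ℝ :=
  psiSq aSq β - psiSq aSq β' -
    ∑ j, ((1 / 2) * Real.arsinh (β' j / aSq j)) * (β j - β' j)

section AuxLemmas

variable {d n : ℕ} (x : Fin n → Fin d → ℝ) (y : Fin n → ℝ) (α : Fin d → ℝ)
    (γ : ℕ → ℝ) (Bk : ℕ → Finset (Fin n))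


lemma Witer_fst_succ (k : ℕ) (j : Fin d) :
    (Witer x y α γ Bk (k+1)).1 j = (1 - γ k * gIter x y α γ Bk k j) * (Witer x y α γ Bk k).1 j := rfl

lemma Witer_snd_succ (k : ℕ) (j : Fin d) :
    (Witer x y α γ Bk (k+1)).2 j = (1 + γ k * gIter x y α γ Bk k j) * (Witer x y α γ Bk k).2 j := rfl

lemma Witer_fst (k : ℕ) (j : Fin d) :
    (Witer x y α γ Bk k).1 j = α j * ∏ ℓ ∈ Finset.range k, (1 - γ ℓ * gIter x y α γ Bk ℓ j) := by
  induction k with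
  | zero => simp [Witer]
  | succ k ih => rw [Finset.prod_range_succ, Witer_fst_succ, ih]; ring

lemma Witer_snd (k : ℕ) (j : Fin d) :
    (Witer x y α γ Bk k).2 j = α j * ∏ ℓ ∈ Finset.range k, (1 + γ ℓ * gIter x y α γ Bk ℓ j) := by
  induction k with
  | zero => simp [Witer]
  | succ k ih => rw [Finset.prod_range_succ, Witer_snd_succ, ih]; ring

lemma exp_neg_qplus {t : ℝ} (ht : |t| < 1) :
    Real.exp (-(qplus t)) = Real.exp (2 * t) * (1 - t) ^ 2 := by
  have h1 : (0:ℝ) < 1 - t := by cases abs_lt.1 ht; linarith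
  have : -(qplus t) = 2 * t + Real.log ((1 - t) ^ 2) := by rw [qplus]; ring
  rw [this, Real.exp_add, Real.exp_log (by positivity)]

lemma exp_neg_qminus {t : ℝ} (ht : |t| < 1) :
    Real.exp (-(qminus t)) = Real.exp (-(2 * t)) * (1 + t) ^ 2 := by
  have h1 : (0:ℝ) < 1 + t := by cases abs_lt.1 ht; linarith
  have : -(qminus t) = -(2 * t) + Real.log ((1 + t) ^ 2) := by rw [qminus]; ring
  rw [this, Real.exp_add, Real.exp_log (by positivity)]


lemma alphaPlusSq_eq (hstep : ∀ k j, |γ k * gIter x y α γ Bk k j| < 1) (k : ℕ) (j : Fin d) :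
    alphaPlusSq x y α γ Bk k j =
      Real.exp (2 * ∑ ℓ ∈ Finset.range k, γ ℓ * gIter x y α γ Bk ℓ j) *
        ((α j) ^ 2 * (∏ ℓ ∈ Finset.range k, (1 - γ ℓ * gIter x y α γ Bk ℓ j)) ^ 2) := by
  rw [alphaPlusSq, ← Finset.sum_neg_distrib, Real.exp_sum]
  have h1 : ∀ ℓ ∈ Finset.range k, Real.exp (-(qplus (γ ℓ * gIter x y α γ Bk ℓ j)))
      = Real.exp (2 * (γ ℓ * gIter x y α γ Bk ℓ j)) * (1 - γ ℓ * gIter x y α γ Bk ℓ j) ^ 2 :=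
    fun ℓ _ => exp_neg_qplus (hstep ℓ j)
  rw [Finset.prod_congr rfl h1, Finset.prod_mul_distrib, ← Real.exp_sum, ← Finset.prod_pow,
    ← Finset.mul_sum]
  ring

lemma alphaMinusSq_eq (hstep : ∀ k j, |γ k * gIter x y α γ Bk k j| < 1) (k : ℕ) (j : Fin d) :
    alphaMinusSq x y α γ Bk k j =
      Real.exp (-(2 * ∑ ℓ ∈ Finset.range k, γ ℓ * gIter x y α γ Bk ℓ j)) *
        ((α j) ^ 2 * (∏ ℓ ∈ Finset.range k, (1 + γ ℓ * gIter x y α γ Bk ℓ j)) ^ 2) := by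
  rw [alphaMinusSq, ← Finset.sum_neg_distrib, Real.exp_sum]
  have h1 : ∀ ℓ ∈ Finset.range k, Real.exp (-(qminus (γ ℓ * gIter x y α γ Bk ℓ j)))
      = Real.exp (-(2 * (γ ℓ * gIter x y α γ Bk ℓ j))) * (1 + γ ℓ * gIter x y α γ Bk ℓ j) ^ 2 :=
    fun ℓ _ => exp_neg_qminus (hstep ℓ j)
  rw [Finset.prod_congr rfl h1, Finset.prod_mul_distrib, ← Real.exp_sum, ← Finset.prod_pow]
  have h2 : ∑ ℓ ∈ Finset.range k, -(2 * (γ ℓ * gIter x y α γ Bk ℓ j))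
      = -(2 * ∑ ℓ ∈ Finset.range k, γ ℓ * gIter x y α γ Bk ℓ j) := by
    rw [Finset.mul_sum, ← Finset.sum_neg_distrib]
  rw [h2]; ring

lemma alphaSq_eq (hstep : ∀ k j, |γ k * gIter x y α γ Bk k j| < 1) (k : ℕ) (j : Fin d) :
    alphaSq x y α γ Bk k j = (α j) ^ 2 * (∏ ℓ ∈ Finset.range k, (1 - γ ℓ * gIter x y α γ Bk ℓ j))
      * (∏ ℓ ∈ Finset.range k, (1 + γ ℓ * gIter x y α γ Bk ℓ j)) := by
  have hP : 0 < ∏ ℓ ∈ Finset.range k, (1 - γ ℓ * gIter x y α γ Bk ℓ j) :=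
    Finset.prod_pos fun ℓ _ => by have := abs_lt.1 (hstep ℓ j); linarith [this.2]
  have hQ : 0 < ∏ ℓ ∈ Finset.range k, (1 + γ ℓ * gIter x y α γ Bk ℓ j) :=
    Finset.prod_pos fun ℓ _ => by have := abs_lt.1 (hstep ℓ j); linarith [this.1]
  rw [alphaSq, alphaPlusSq_eq x y α γ Bk hstep, alphaMinusSq_eq x y α γ Bk hstep,
    show ∀ S A P Q : ℝ, Real.exp S * (A ^ 2 * P ^ 2) * (Real.exp (-S) * (A ^ 2 * Q ^ 2))
      = (Real.exp S * Real.exp (-S)) * (A ^ 2 * P * Q) ^ 2 from fun S A P Q => by ring,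
    ← Real.exp_add, add_neg_cancel, Real.exp_zero, one_mul,
    Real.sqrt_sq (by positivity)]


lemma grad_identity (hα : ∀ j, 0 < α j)
    (hstep : ∀ k j, |γ k * gIter x y α γ Bk k j| < 1) (k : ℕ) (j : Fin d) :
    (1 / 2) * Real.arsinh (betaIter x y α γ Bk k j / alphaSq x y α γ Bk k j)
      - phiK x y α γ Bk k j = -(∑ ℓ ∈ Finset.range k, γ ℓ * gIter x y α γ Bk ℓ j) := by
  set P := ∏ ℓ ∈ Finset.range k, (1 - γ ℓ * gIter x y α γ Bk ℓ j) with hPdef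
  set Q := ∏ ℓ ∈ Finset.range k, (1 + γ ℓ * gIter x y α γ Bk ℓ j) with hQdef
  set S := ∑ ℓ ∈ Finset.range k, γ ℓ * gIter x y α γ Bk ℓ j with hSdef
  have hP : 0 < P :=
    Finset.prod_pos fun ℓ _ => by have := abs_lt.1 (hstep ℓ j); linarith [this.2]
  have hQ : 0 < Q :=
    Finset.prod_pos fun ℓ _ => by have := abs_lt.1 (hstep ℓ j); linarith [this.1]
  have ha : 0 < α j := hα j
  have hβ : betaIter x y α γ Bk k j = ((α j * P) ^ 2 - (α j * Q) ^ 2) / 2 := by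
    rw [betaIter, Witer_fst, Witer_snd]
  have hαSq : alphaSq x y α γ Bk k j = (α j) ^ 2 * P * Q := alphaSq_eq x y α γ Bk hstep k j
  have h1 : betaIter x y α γ Bk k j / alphaSq x y α γ Bk k j
      = Real.sinh (Real.log P - Real.log Q) := by
    rw [hβ, hαSq, Real.sinh_eq, neg_sub, Real.exp_sub, Real.exp_sub,
      Real.exp_log hP, Real.exp_log hQ]
    field_simp
  have h2 : (alphaPlusSq x y α γ Bk k j - alphaMinusSq x y α γ Bk k j)
      / (2 * alphaSq x y α γ Bk k j) = Real.sinh (2 * S + (Real.log P - Real.log Q)) := by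
    rw [alphaPlusSq_eq x y α γ Bk hstep, alphaMinusSq_eq x y α γ Bk hstep, hαSq, Real.sinh_eq,
      neg_add, neg_sub, Real.exp_add, Real.exp_add, Real.exp_sub, Real.exp_sub,
      Real.exp_log hP, Real.exp_log hQ, ← hSdef]
    rw [Real.exp_neg]
    have he : 0 < Real.exp (2 * S) := Real.exp_pos _
    field_simp
    ring
  rw [h1, phiK, h2, Real.arsinh_sinh, Real.arsinh_sinh]
  ring


lemma gIter_mem_span (ℓ : ℕ) :
    gIter x y α γ Bk ℓ ∈ Submodule.span ℝ (Set.range x) := by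
  have : gIter x y α γ Bk ℓ = ∑ i ∈ Bk ℓ,
      ((1 / ((Bk ℓ).card : ℝ)) * (dotp (x i) (betaIter x y α γ Bk ℓ) - y i)) • x i := by
    funext j
    simp only [gIter, gradBatch, Finset.sum_apply, Pi.smul_apply, smul_eq_mul, Finset.mul_sum]
    exact Finset.sum_congr rfl fun i _ => by ring
  rw [this]
  exact Submodule.sum_mem _ fun i _ =>
    Submodule.smul_mem _ _ (Submodule.subset_span ⟨i, rfl⟩)

lemma partial_sum_mem_span (k : ℕ) :
    (fun j => ∑ ℓ ∈ Finset.range k, γ ℓ * gIter x y α γ Bk ℓ j)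
      ∈ Submodule.span ℝ (Set.range x) := by
  have : (fun j => ∑ ℓ ∈ Finset.range k, γ ℓ * gIter x y α γ Bk ℓ j)
      = ∑ ℓ ∈ Finset.range k, γ ℓ • gIter x y α γ Bk ℓ := by
    funext j; simp [Finset.sum_apply]
  rw [this]
  exact Submodule.sum_mem _ fun ℓ _ =>
    Submodule.smul_mem _ _ (gIter_mem_span x y α γ Bk ℓ)

lemma span_orth {u β βinf : Fin d → ℝ} (hu : u ∈ Submodule.span ℝ (Set.range x))
    (hβ : ∀ i, dotp (x i) β = y i) (hβinf : ∀ i, dotp (x i) βinf = y i) :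
    ∑ j, u j * (β j - βinf j) = 0 := by
  induction hu using Submodule.span_induction with
  | mem u hu =>
    obtain ⟨i, rfl⟩ := hu
    have : ∑ j, x i j * (β j - βinf j) = dotp (x i) β - dotp (x i) βinf := by
      rw [dotp, dotp, ← Finset.sum_sub_distrib]
      exact Finset.sum_congr rfl fun j _ => by ring
    rw [this, hβ, hβinf, sub_self]
  | zero => simp
  | add u v _ _ hu hv =>
    have h : ∑ j, (u + v) j * (β j - βinf j)
        = (∑ j, u j * (β j - βinf j)) + ∑ j, v j * (β j - βinf j) := by
      rw [← Finset.sum_add_distrib]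
      exact Finset.sum_congr rfl fun j _ => by simp [Pi.add_apply]; ring
    rw [h, hu, hv, add_zero]
  | smul c u _ hu =>
    rw [Finset.sum_congr rfl (fun j (_ : j ∈ Finset.univ) =>
      show (c • u) j * (β j - βinf j) = c * (u j * (β j - βinf j)) by simp; ring),
      ← Finset.mul_sum, hu, mul_zero]

lemma hasDerivAt_entcoord {a : ℝ} (ha : 0 < a) (b : ℝ) :
    HasDerivAt (fun t => (1/2) * (t * Real.arsinh (t/a) - Real.sqrt (t^2 + a^2)))
      ((1/2) * Real.arsinh (b/a)) b := by
  have h1 : HasDerivAt (fun t : ℝ => t / a) (1/a) b := (hasDerivAt_id b).div_const a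
  have h2 : HasDerivAt (fun t => Real.arsinh (t/a))
      ((Real.sqrt (1 + (b/a)^2))⁻¹ * (1/a)) b := h1.arsinh
  have h3 : HasDerivAt (fun t => t * Real.arsinh (t/a))
      (1 * Real.arsinh (b/a) + b * ((Real.sqrt (1 + (b/a)^2))⁻¹ * (1/a))) b :=
    (hasDerivAt_id b).mul h2
  have h4 : HasDerivAt (fun t : ℝ => t^2 + a^2) (2*b) b := by
    simpa using (hasDerivAt_pow 2 b).add_const (a^2)
  have h5 : HasDerivAt (fun t => Real.sqrt (t^2 + a^2))
      (2*b / (2 * Real.sqrt (b^2 + a^2))) b := h4.sqrt (by positivity)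
  have h6 : HasDerivAt (fun t => (1/2) * (t * Real.arsinh (t/a) - Real.sqrt (t^2 + a^2))) _ b :=
    (h3.sub h5).const_mul ((1:ℝ)/2)
  convert h6 using 1
  have key : Real.sqrt (b^2 + a^2) = a * Real.sqrt (1 + (b/a)^2) := by
    rw [← Real.sqrt_sq ha.le, ← Real.sqrt_mul (sq_nonneg a)]
    rw [Real.sqrt_sq ha.le]
    congr 1
    field_simp
    ring
  rw [key]
  have hs : 0 < Real.sqrt (1 + (b/a)^2) := Real.sqrt_pos.2 (by positivity)
  field_simp
  ring

lemma breg_nonneg {a : ℝ} (ha : 0 < a) (b c : ℝ) :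
    0 ≤ (1/2) * (b * Real.arsinh (b/a) - Real.sqrt (b^2 + a^2))
      - (1/2) * (c * Real.arsinh (c/a) - Real.sqrt (c^2 + a^2))
      - (1/2) * Real.arsinh (c/a) * (b - c) ∧
    ((1/2) * (b * Real.arsinh (b/a) - Real.sqrt (b^2 + a^2))
      - (1/2) * (c * Real.arsinh (c/a) - Real.sqrt (c^2 + a^2))
      - (1/2) * Real.arsinh (c/a) * (b - c) = 0 → b = c) := by
  set F : ℝ → ℝ := fun t => (1/2) * (t * Real.arsinh (t/a) - Real.sqrt (t^2 + a^2))
      - (1/2) * (c * Real.arsinh (c/a) - Real.sqrt (c^2 + a^2))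
      - (1/2) * Real.arsinh (c/a) * (t - c) with hF
  have hFd : ∀ t, HasDerivAt F ((1/2) * Real.arsinh (t/a) - (1/2) * Real.arsinh (c/a)) t := by
    intro t
    have h := ((hasDerivAt_entcoord ha t).sub_const
      ((1/2) * (c * Real.arsinh (c/a) - Real.sqrt (c^2 + a^2)))).sub
      ((((hasDerivAt_id t).sub_const c)).const_mul ((1/2) * Real.arsinh (c/a)))
    simpa [hF, Pi.sub_def] using h
  have hFc : Continuous F := by
    have : Differentiable ℝ F := fun t => (hFd t).differentiableAt
    exact this.continuous
  have hF0 : F c = 0 := by simp [hF]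
  have hpos : ∀ b', b' ≠ c → 0 < F b' := by
    intro b' hbc
    rcases lt_or_gt_of_ne hbc with h | h
    · have hanti : StrictAntiOn F (Set.Iic c) := by
        apply strictAntiOn_of_deriv_neg (convex_Iic c) hFc.continuousOn
        intro t ht
        rw [interior_Iic] at ht
        rw [(hFd t).deriv]
        have : Real.arsinh (t/a) < Real.arsinh (c/a) :=
          Real.arsinh_lt_arsinh.2 ((div_lt_div_iff_of_pos_right ha).2 ht)
        linarith
      have := hanti (Set.mem_Iic.2 h.le) (Set.mem_Iic.2 le_rfl) h
      rw [hF0] at this; exact this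
    · have hmono : StrictMonoOn F (Set.Ici c) := by
        apply strictMonoOn_of_deriv_pos (convex_Ici c) hFc.continuousOn
        intro t ht
        rw [interior_Ici] at ht
        rw [(hFd t).deriv]
        have : Real.arsinh (c/a) < Real.arsinh (t/a) :=
          Real.arsinh_lt_arsinh.2 ((div_lt_div_iff_of_pos_right ha).2 ht)
        linarith
      have := hmono (Set.mem_Ici.2 le_rfl) (Set.mem_Ici.2 h.le) h
      rw [hF0] at this; exact this
  constructor
  · by_cases hbc : b = c
    · subst hbc; simp
    · exact (hpos b hbc).le
  · intro h0
    by_contra hbc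
    exact absurd h0 (ne_of_gt (hpos b hbc))

end AuxLemmas

/-- if the iterates, the scales `α_k` and the offsets `φ_k` converge, then the
limit `β*_∞` is the unique minimiser over `S` of `β ↦ D_{ψ_{α_∞}}(β, β̃₀)` with
`β̃₀ = α_∞² ⊙ sinh(2φ_∞)`. -/

theorem stmt2 (d n : ℕ) (x : Fin n → Fin d → ℝ) (y : Fin n → ℝ)
    (α : Fin d → ℝ) (hα : ∀ j, 0 < α j)
    (γ : ℕ → ℝ) (hγ : ∀ k, 0 ≤ γ k)
    (Bk : ℕ → Finset (Fin n)) (hBk : ∀ k, (Bk k).Nonempty)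
    (hstep : ∀ k j, |γ k * gIter x y α γ Bk k j| < 1)
    (βinf : Fin d → ℝ) (hβS : ∀ i, dotp (x i) βinf = y i)
    (hβconv : ∀ j, Filter.Tendsto (fun k => betaIter x y α γ Bk k j)
      Filter.atTop (nhds (βinf j)))
    (αinf : Fin d → ℝ) (hαinf : ∀ j, 0 < αinf j)
    (hαconv : ∀ j, Filter.Tendsto (fun k => Real.sqrt (alphaSq x y α γ Bk k j))
      Filter.atTop (nhds (αinf j)))
    (φinf : Fin d → ℝ)
    (hφconv : ∀ j, Filter.Tendsto (fun k => phiK x y α γ Bk k j)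
      Filter.atTop (nhds (φinf j))) :
    (∀ β : Fin d → ℝ, (∀ i, dotp (x i) β = y i) →
      DpsiSq (fun j => (αinf j) ^ 2) βinf (fun j => (αinf j) ^ 2 * Real.sinh (2 * φinf j)) ≤
        DpsiSq (fun j => (αinf j) ^ 2) β (fun j => (αinf j) ^ 2 * Real.sinh (2 * φinf j))) ∧
    (∀ β : Fin d → ℝ, (∀ i, dotp (x i) β = y i) →
      DpsiSq (fun j => (αinf j) ^ 2) β (fun j => (αinf j) ^ 2 * Real.sinh (2 * φinf j)) ≤
        DpsiSq (fun j => (αinf j) ^ 2) βinf (fun j => (αinf j) ^ 2 * Real.sinh (2 * φinf j)) →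
      β = βinf) := by
  classical
  set a : Fin d → ℝ := fun j => (αinf j) ^ 2 with ha
  set bt0 : Fin d → ℝ := fun j => (αinf j) ^ 2 * Real.sinh (2 * φinf j) with hbt0
  set v : Fin d → ℝ := fun j => φinf j - (1 / 2) * Real.arsinh (βinf j / (αinf j) ^ 2) with hv
  have hapos : ∀ j, 0 < a j := fun j => by simp only [ha]; exact pow_pos (hαinf j) 2
  -- convergence of the partial sums of stochastic gradients
  have htend : ∀ j, Tendsto (fun k => ∑ ℓ ∈ Finset.range k, γ ℓ * gIter x y α γ Bk ℓ j)
      atTop (nhds (v j)) := by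
    intro j
    have hαs : Tendsto (fun k => alphaSq x y α γ Bk k j) atTop (nhds ((αinf j) ^ 2)) := by
      have h := (hαconv j).pow 2
      have hsq : ∀ k, (Real.sqrt (alphaSq x y α γ Bk k j)) ^ 2 = alphaSq x y α γ Bk k j :=
        fun k => Real.sq_sqrt (by simp only [alphaSq]; exact Real.sqrt_nonneg _)
      simpa [hsq] using h
    have hβs : Tendsto (fun k => betaIter x y α γ Bk k j / alphaSq x y α γ Bk k j)
        atTop (nhds (βinf j / (αinf j) ^ 2)) :=
      (hβconv j).div hαs (pow_pos (hαinf j) 2).ne'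
    have harc : Tendsto (fun k => (1 / 2 : ℝ) *
        Real.arsinh (betaIter x y α γ Bk k j / alphaSq x y α γ Bk k j))
        atTop (nhds ((1 / 2) * Real.arsinh (βinf j / (αinf j) ^ 2))) :=
      ((Real.continuous_arsinh.tendsto _).comp hβs).const_mul _
    have hlim := (hφconv j).sub harc
    simp only [hv]
    refine hlim.congr fun k => ?_
    have hid := grad_identity x y α γ Bk hα hstep k j
    linarith
  -- the limit belongs to the span of the data
  have hvmem : v ∈ Submodule.span ℝ (Set.range x) := by
    have hclosed : IsClosed ((Submodule.span ℝ (Set.range x) : Submodule ℝ (Fin d → ℝ)) :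
        Set (Fin d → ℝ)) := Submodule.closed_of_finiteDimensional _
    exact hclosed.mem_of_tendsto (tendsto_pi_nhds.2 htend)
      (Filter.Eventually.of_forall (partial_sum_mem_span x y α γ Bk))
  -- per-coordinate Bregman differences
  set e : (Fin d → ℝ) → Fin d → ℝ := fun β j =>
    (1/2) * (β j * Real.arsinh (β j / a j) - Real.sqrt ((β j)^2 + (a j)^2))
      - (1/2) * (βinf j * Real.arsinh (βinf j / a j) - Real.sqrt ((βinf j)^2 + (a j)^2))
      - (1/2) * Real.arsinh (βinf j / a j) * (β j - βinf j) with hedef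
  have harsinh : ∀ j, Real.arsinh (bt0 j / a j) = 2 * φinf j := by
    intro j
    simp only [hbt0, ha]
    rw [mul_comm, mul_div_assoc, div_self (pow_pos (hαinf j) 2).ne', mul_one,
      Real.arsinh_sinh]
  have key : ∀ β' : Fin d → ℝ, DpsiSq a β' bt0
      = psiSq a β' - psiSq a bt0 - ∑ j, φinf j * (β' j - bt0 j) := by
    intro β'
    rw [DpsiSq]
    congr 1
    exact Finset.sum_congr rfl fun j _ => by rw [harsinh j]; ring
  have hmain : ∀ β' : Fin d → ℝ, (∀ i, dotp (x i) β' = y i) →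
      DpsiSq a β' bt0 - DpsiSq a βinf bt0 = ∑ j, e β' j := by
    intro β' hβ'
    have horth : ∑ j, v j * (β' j - βinf j) = 0 := span_orth x y hvmem hβ' hβS
    have halg : DpsiSq a β' bt0 - DpsiSq a βinf bt0
        = ∑ j, (e β' j - v j * (β' j - βinf j)) := by
      rw [key β', key βinf]
      simp only [psiSq]
      rw [show ∀ A B C D E : ℝ, A - B - C - (D - B - E) = A - D - (C - E) from
          fun A B C D E => by ring,
        ← mul_sub, ← Finset.sum_sub_distrib, Finset.mul_sum, ← Finset.sum_sub_distrib,
        ← Finset.sum_sub_distrib]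
      refine Finset.sum_congr rfl fun j _ => ?_
      simp only [hedef, hv, ha]
      ring
    rw [halg, Finset.sum_sub_distrib, horth, sub_zero]
  have hnn : ∀ β' : Fin d → ℝ, ∀ j ∈ Finset.univ, 0 ≤ e β' j := fun β' j _ =>
    (breg_nonneg (hapos j) (β' j) (βinf j)).1
  constructor
  · intro β hβ
    have h := hmain β hβ
    have h2 := Finset.sum_nonneg (hnn β)
    linarith
  · intro β hβ hle
    have h := hmain β hβ
    have h2 := Finset.sum_nonneg (hnn β)
    have hsum0 : ∑ j, e β j = 0 := le_antisymm (by linarith) h2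
    funext j
    exact (breg_nonneg (hapos j) (β j) (βinf j)).2
      ((Finset.sum_eq_zero_iff_of_nonneg (hnn β)).1 hsum0 j (Finset.mem_univ j))

end
end

section
/- There exists a numerical constant c > 0 with the following property. Let β* ∈ S and B > 0 with B ≥ max(‖β*‖_∞, max_i α_i²). If ‖β_k‖_∞ ≤ B and γ_k ≤ c/(L·B) for all k ≥ 0, then the weighted sum of batch losses along the trajectory satisfies Σ_{k=0}^∞ γ_k L_{B_k}(β_k) ≤ D_{h_0}(β*, β_0) = ψ_α(β*); in particular this series converges. -/
open Finset Filter Real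

set_option maxHeartbeats 4000000

noncomputable section

/-- cosh lies above its tangent lines. -/
lemma cosh_tangent_le (a b : ℝ) : Real.cosh a + Real.sinh a * (b - a) ≤ Real.cosh b := by
  rcases lt_trichotomy a b with h | h | h
  · obtain ⟨c, hc, hceq⟩ := exists_hasDerivAt_eq_slope Real.cosh Real.sinh h
      (Real.continuous_cosh.continuousOn) (fun x _ => Real.hasDerivAt_cosh x)
    have hmono : Real.sinh a ≤ Real.sinh c := Real.sinh_le_sinh.2 hc.1.le
    have hba : 0 < b - a := by linarith
    have hmul : Real.cosh b - Real.cosh a = Real.sinh c * (b - a) :=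
      (div_eq_iff hba.ne').mp hceq.symm
    nlinarith [mul_le_mul_of_nonneg_right hmono hba.le]
  · simp [h]
  · obtain ⟨c, hc, hceq⟩ := exists_hasDerivAt_eq_slope Real.cosh Real.sinh h
      (Real.continuous_cosh.continuousOn) (fun x _ => Real.hasDerivAt_cosh x)
    have hmono : Real.sinh c ≤ Real.sinh a := Real.sinh_le_sinh.2 hc.2.le
    have hba : 0 < a - b := by linarith
    have hmul : Real.cosh a - Real.cosh b = Real.sinh c * (a - b) :=
      (div_eq_iff hba.ne').mp hceq.symm
    nlinarith [mul_le_mul_of_nonneg_right hmono hba.le]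

lemma sqrt_diff_le {A A' : ℝ} (h0 : 0 ≤ A') (h : A' ≤ A) :
    Real.sqrt A - Real.sqrt A' ≤ (A - A') / Real.sqrt A := by
  rcases eq_or_lt_of_le (h0.trans h) with h2 | h2
  · have hA' : A' = 0 := le_antisymm (h.trans h2.symm.le) h0
    simp [← h2, hA']
  · rw [le_div_iff₀ (Real.sqrt_pos.2 h2)]
    have h3 : Real.sqrt A * Real.sqrt A = A := Real.mul_self_sqrt (h0.trans h)
    have h4 : A' ≤ Real.sqrt A' * Real.sqrt A := by
      nth_rewrite 1 [← Real.sqrt_mul_self h0]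
      rw [Real.sqrt_mul h0]
      exact mul_le_mul_of_nonneg_left (Real.sqrt_le_sqrt h) (Real.sqrt_nonneg _)
    nlinarith [Real.sqrt_nonneg A, Real.sqrt_nonneg A']

lemma arsinh_scale {u lam : ℝ} (hu : 0 ≤ u) (hl : 1 ≤ lam) :
    Real.arsinh (lam * u) ≤ Real.log lam + Real.arsinh u := by
  simp only [Real.arsinh]
  rw [← Real.log_mul (by positivity) (by positivity)]
  have h1 : Real.sqrt (1 + (lam*u)^2) ≤ lam * Real.sqrt (1 + u^2) := by
    calc Real.sqrt (1 + (lam*u)^2) ≤ Real.sqrt (lam^2*(1+u^2)) :=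
          Real.sqrt_le_sqrt (by nlinarith)
      _ = lam * Real.sqrt (1+u^2) := by
          rw [Real.sqrt_mul (by positivity), Real.sqrt_sq (by linarith)]
  apply Real.log_le_log (by positivity)
  nlinarith [Real.sqrt_nonneg (1 + u^2)]

lemma mul_arsinh_diff_le (x c c' : ℝ) (hc' : 0 < c') (h : c' ≤ c) :
    x * (Real.arsinh (x/c') - Real.arsinh (x/c)) ≤ |x| * Real.log (c/c') := by
  have hc : 0 < c := lt_of_lt_of_le hc' h
  have hl : 1 ≤ c / c' := (one_le_div hc').2 h
  have key : ∀ u : ℝ, 0 ≤ u → Real.arsinh (u/c') - Real.arsinh (u/c) ≤ Real.log (c/c') := by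
    intro u hu
    have he : u / c' = (c/c') * (u/c) := by field_simp
    rw [he]
    have := arsinh_scale (by positivity : (0:ℝ) ≤ u/c) hl
    linarith
  rcases le_or_gt 0 x with hx | hx
  · rw [abs_of_nonneg hx]
    exact mul_le_mul_of_nonneg_left (key x hx) hx
  · rw [abs_of_neg hx]
    have hkey := key (-x) (by linarith)
    rw [neg_div, neg_div, Real.arsinh_neg, Real.arsinh_neg] at hkey
    nlinarith [hkey]

lemma log_ratio_close (t : ℝ) (ht : |t| ≤ 1/2) :
    |Real.log (1+t) - Real.log (1-t) - 2*t| ≤ 4*|t|^3 := by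
  have h1 : |t| < 1 := lt_of_le_of_lt ht (by norm_num)
  have h1' : |(-t)| < 1 := by rwa [abs_neg]
  have A := Real.abs_log_sub_add_sum_range_le h1 2
  have B := Real.abs_log_sub_add_sum_range_le h1' 2
  rw [show (2:ℕ)+1 = 3 from rfl] at A B
  simp only [Finset.sum_range_succ, Finset.sum_range_zero, abs_neg] at A B
  norm_num at A B
  have hden : |t|^3 / (1 - |t|) ≤ 2 * |t|^3 := by
    rw [div_le_iff₀ (by linarith)]
    nlinarith [pow_nonneg (abs_nonneg t) 3]
  have hE : Real.log (1+t) - Real.log (1-t) - 2*t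
      = (-t + t^2/2 + Real.log (1+t)) - (t + t^2/2 + Real.log (1-t)) := by ring
  rw [hE]
  have hA : |t + t^2/2 + Real.log (1-t)| ≤ 2*|t|^3 := by
    refine le_trans (le_of_eq ?_) (A.trans hden); ring_nf
  have hB : |-t + t^2/2 + Real.log (1+t)| ≤ 2*|t|^3 := by
    refine le_trans (le_of_eq ?_) (B.trans hden); ring_nf
  calc |(-t + t^2/2 + Real.log (1+t)) - (t + t^2/2 + Real.log (1-t))|
      ≤ |(-t + t^2/2 + Real.log (1+t))| + |(t + t^2/2 + Real.log (1-t))| := abs_sub _ _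
    _ ≤ 4*|t|^3 := by linarith

lemma neg_log_one_sub_le {x : ℝ} (hx : 0 ≤ x) (hx2 : x ≤ 1/2) :
    -Real.log (1 - x) ≤ 2*x := by
  have h1 : (0:ℝ) < 1 - x := by linarith
  have h2 := Real.log_le_sub_one_of_pos (show (0:ℝ) < (1-x)⁻¹ by positivity)
  rw [Real.log_inv] at h2
  have h3 : (1-x)⁻¹ - 1 = x / (1-x) := by field_simp; ring
  rw [h3] at h2
  have h4 : x / (1-x) ≤ 2*x := by
    rw [div_le_iff₀ h1]; nlinarith
  linarith


lemma sum_cs {d : ℕ} (f g : Fin d → ℝ) : ∑ j, f j * g j ≤ norm2 f * norm2 g := by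
  have h := Finset.sum_mul_sq_le_sq_mul_sq Finset.univ f g
  calc ∑ j, f j * g j ≤ |∑ j, f j * g j| := le_abs_self _
    _ = Real.sqrt ((∑ j, f j * g j)^2) := (Real.sqrt_sq_eq_abs _).symm
    _ ≤ Real.sqrt ((∑ j, f j ^2) * (∑ j, g j ^2)) := Real.sqrt_le_sqrt h
    _ = norm2 f * norm2 g := by
        rw [norm2, norm2, ← Real.sqrt_mul (Finset.sum_nonneg fun j _ => sq_nonneg _)]

def Efun (b β c : ℝ) : ℝ :=
  (1/2)*(b*Real.arsinh (b/c) - Real.sqrt (b^2+c^2))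
  - (1/2)*(β*Real.arsinh (β/c) - Real.sqrt (β^2+c^2))
  - (1/2)*Real.arsinh (β/c)*(b-β)

lemma DhK_eq_sum {d n : ℕ} (x : Fin n → Fin d → ℝ) (y : Fin n → ℝ) (α : Fin d → ℝ)
    (γ : ℕ → ℝ) (Bk : ℕ → Finset (Fin n)) (k : ℕ) (β β' : Fin d → ℝ) :
    DhK x y α γ Bk k β β' = ∑ j, Efun (β j) (β' j) (alphaSq x y α γ Bk k j) := by
  simp only [DhK, hK, psiSq, dotp, gradHK, Efun, Finset.mul_sum, ← Finset.sum_sub_distrib]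
  exact Finset.sum_congr rfl (fun j _ => by ring)

lemma Efun_nonneg {b β c : ℝ} (hc : 0 < c) : 0 ≤ Efun b β c := by
  have hsb : Real.sqrt (b^2+c^2) = c * Real.cosh (Real.arsinh (b/c)) := by
    rw [Real.cosh_arsinh,
      show b^2+c^2 = c^2*(1+(b/c)^2) by field_simp; ring,
      Real.sqrt_mul (by positivity), Real.sqrt_sq hc.le]
  have hsβ : Real.sqrt (β^2+c^2) = c * Real.cosh (Real.arsinh (β/c)) := by
    rw [Real.cosh_arsinh,
      show β^2+c^2 = c^2*(1+(β/c)^2) by field_simp; ring,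
      Real.sqrt_mul (by positivity), Real.sqrt_sq hc.le]
  rw [Efun, hsb, hsβ]
  set A := Real.arsinh (b/c) with hA
  set U := Real.arsinh (β/c) with hU
  have hb : c * Real.sinh A = b := by rw [hA, Real.sinh_arsinh]; field_simp
  have hβ : c * Real.sinh U = β := by rw [hU, Real.sinh_arsinh]; field_simp
  rw [← hb, ← hβ]
  nlinarith [mul_le_mul_of_nonneg_left (cosh_tangent_le A U) hc.le]


lemma key_ineq (t w1 w2 c b B : ℝ) (h50 : |t| ≤ 1/50) (hw1 : 0 < w1) (hw2 : 0 < w2)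
    (hcpos : 0 < c) (hcB : c ≤ B) (hbB : |b| ≤ B) (hβB : |(w1^2-w2^2)/2| ≤ B) (hB : 0 < B)
    (hsq : Real.sqrt (((w1^2-w2^2)/2)^2 + c^2) = (w1^2+w2^2)/2) :
    (1/2)*(b * Real.arsinh (b / ((1-t^2)*c)) - Real.sqrt (b^2 + ((1-t^2)*c)^2))
      + (((1-t)*w1)^2 + ((1+t)*w2)^2)/4
      - (1/2)*b*Real.log ((1-t)*w1 / ((1+t)*w2))
      - ((1/2)*(b * Real.arsinh (b / c) - Real.sqrt (b^2 + c^2))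
        + (w1^2 + w2^2)/4 - (1/2)*b*Real.log (w1/w2))
    ≤ -(t * ((w1^2-w2^2)/2 - b)) + 3*B*t^2 := by
  have h50' := abs_le.1 h50
  have h1t : (0:ℝ) < 1 - t := by linarith [h50'.2]
  have h2t : (0:ℝ) < 1 + t := by linarith [h50'.1]
  have ht2 : t^2 ≤ 1/2 := by nlinarith [sq_abs t, abs_nonneg t]
  have hlog : Real.log ((1-t)*w1 / ((1+t)*w2))
      = Real.log (1-t) - Real.log (1+t) + Real.log (w1/w2) := by
    rw [Real.log_div (by positivity) (by positivity),
      Real.log_mul h1t.ne' hw1.ne', Real.log_mul h2t.ne' hw2.ne',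
      Real.log_div hw1.ne' hw2.ne']
    ring
  rw [hlog]
  have hc' : (0:ℝ) < (1-t^2)*c := mul_pos (by nlinarith) hcpos
  have hc'le : (1-t^2)*c ≤ c := by nlinarith [sq_nonneg t]
  have hP1 : b * (Real.arsinh (b/((1-t^2)*c)) - Real.arsinh (b/c)) ≤ 2*B*t^2 := by
    have h1 := mul_arsinh_diff_le b c ((1-t^2)*c) hc' hc'le
    have h2 : Real.log (c/((1-t^2)*c)) = -Real.log (1-t^2) := by
      rw [show c/((1-t^2)*c) = (1-t^2)⁻¹ from by
        rw [mul_comm, ← div_div, div_self hcpos.ne', one_div], Real.log_inv]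
    have h3 : -Real.log (1-t^2) ≤ 2*t^2 := neg_log_one_sub_le (sq_nonneg t) ht2
    have hlog0 : Real.log (1-t^2) ≤ 0 := by
      have hx1 : (0:ℝ) ≤ 1-t^2 := by nlinarith
      have hx2 : (1:ℝ)-t^2 ≤ 1 := by nlinarith [sq_nonneg t]
      exact Real.log_nonpos hx1 hx2
    have h4 : |b| * Real.log (c/((1-t^2)*c)) ≤ B * (2*t^2) := by
      rw [h2]
      exact mul_le_mul hbB h3 (by linarith) hB.le
    calc b * (Real.arsinh (b/((1-t^2)*c)) - Real.arsinh (b/c))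
        ≤ |b| * Real.log (c/((1-t^2)*c)) := h1
      _ ≤ B * (2*t^2) := h4
      _ = 2*B*t^2 := by ring
  have hP2 : Real.sqrt (b^2+c^2) - Real.sqrt (b^2+((1-t^2)*c)^2) ≤ 2*B*t^2 := by
    have h0 : (0:ℝ) ≤ b^2+((1-t^2)*c)^2 := by positivity
    have hle : b^2+((1-t^2)*c)^2 ≤ b^2+c^2 := by nlinarith [sq_nonneg t, sq_nonneg (t^2)]
    have h1 := sqrt_diff_le h0 hle
    have hcsq : c ≤ Real.sqrt (b^2+c^2) := by
      calc c = Real.sqrt (c^2) := (Real.sqrt_sq hcpos.le).symm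
        _ ≤ Real.sqrt (b^2+c^2) := Real.sqrt_le_sqrt (by nlinarith [sq_nonneg b])
    have h2 : (b^2+c^2 - (b^2+((1-t^2)*c)^2)) / Real.sqrt (b^2+c^2)
        ≤ (2*c^2*t^2) / c := by
      apply div_le_div₀ (by positivity) _ hcpos hcsq
      nlinarith [mul_nonneg (sq_nonneg c) (sq_nonneg (t^2))]
    have h3 : (2*c^2*t^2) / c = 2*c*t^2 := by field_simp
    calc Real.sqrt (b^2+c^2) - Real.sqrt (b^2+((1-t^2)*c)^2)
        ≤ (b^2+c^2 - (b^2+((1-t^2)*c)^2)) / Real.sqrt (b^2+c^2) := h1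
      _ ≤ (2*c^2*t^2) / c := h2
      _ = 2*c*t^2 := h3
      _ ≤ 2*B*t^2 := by nlinarith [sq_nonneg t]
  have hwsum : (w1^2+w2^2)/2 ≤ (3/2)*B := by
    rw [← hsq]
    calc Real.sqrt (((w1^2-w2^2)/2)^2 + c^2)
        ≤ Real.sqrt (((3/2)*B)^2) := Real.sqrt_le_sqrt (by
          nlinarith [hcB, hcpos, sq_abs ((w1^2-w2^2)/2), abs_nonneg ((w1^2-w2^2)/2), hB, hβB])
      _ = (3/2)*B := Real.sqrt_sq (by positivity)
  have hP3 : t^2*(w1^2+w2^2)/4 ≤ (3/4)*B*t^2 := by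
    have := mul_le_mul_of_nonneg_left hwsum (sq_nonneg t)
    nlinarith [sq_nonneg t]
  have hP4 : b*(Real.log (1+t) - Real.log (1-t) - 2*t) ≤ (4/50)*B*t^2 := by
    have h1 := log_ratio_close t (by linarith [h50] : |t| ≤ 1/2)
    have h2 : b*(Real.log (1+t) - Real.log (1-t) - 2*t)
        ≤ |b| * |Real.log (1+t) - Real.log (1-t) - 2*t| := by
      rw [← abs_mul]
      exact le_abs_self _
    have h3 : |t|^3 ≤ (1/50)*t^2 := by
      have he : |t|^3 = |t| * t^2 := by rw [pow_succ, sq_abs]; ring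
      rw [he]
      exact mul_le_mul_of_nonneg_right h50 (sq_nonneg t)
    calc b*(Real.log (1+t) - Real.log (1-t) - 2*t)
        ≤ |b| * |Real.log (1+t) - Real.log (1-t) - 2*t| := h2
      _ ≤ B * (4*|t|^3) := mul_le_mul hbB h1 (abs_nonneg _) hB.le
      _ ≤ B * (4*((1/50)*t^2)) := by nlinarith
      _ = (4/50)*B*t^2 := by ring
  have hBt2 : 0 ≤ B*t^2 := by positivity
  linarith [hP1, hP2, hP3, hP4, hBt2]

/-- the weighted sum of batch losses along the trajectory converges and is bounded
by `D_{h_0}(β*, β_0) = ψ_α(β*)`. -/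
theorem stmt6 : ∃ c : ℝ, 0 < c ∧
    ∀ (d n : ℕ) (x : Fin n → Fin d → ℝ) (y : Fin n → ℝ)
      (α : Fin d → ℝ), (∀ j, 0 < α j) →
    ∀ (γ : ℕ → ℝ), (∀ k, 0 ≤ γ k) →
    ∀ (Bk : ℕ → Finset (Fin n)), (∀ k, (Bk k).Nonempty) →
    ∀ (Lc : ℝ), 0 < Lc →
    (∀ (k : ℕ) (β : Fin d → ℝ), norm2 (HBop x (Bk k) β) ≤ Lc * norm2 β ∧
      ‖HBop x (Bk k) β‖ ≤ Lc * ‖β‖) →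
    ∀ βstar : Fin d → ℝ, (∀ i, dotp (x i) βstar = y i) →
    ∀ B : ℝ, 0 < B → ‖βstar‖ ≤ B → (∀ j, (α j) ^ 2 ≤ B) →
    (∀ k, ‖betaIter x y α γ Bk k‖ ≤ B ∧ γ k ≤ c / (Lc * B)) →
    DhK x y α γ Bk 0 βstar (betaIter x y α γ Bk 0) = psiSq (fun j => (α j) ^ 2) βstar ∧
    Summable (fun k => γ k * batchLoss x y (Bk k) (betaIter x y α γ Bk k)) ∧
    ∑' k, γ k * batchLoss x y (Bk k) (betaIter x y α γ Bk k) ≤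
      psiSq (fun j => (α j) ^ 2) βstar := by
  refine ⟨1/100, by norm_num, ?_⟩
  intro d n x y α hα γ hγ Bk hBk Lc hLc hH βstar hbstar B hB hBstar hαB htraj
  have hLB : 0 < Lc * B := mul_pos hLc hB
  -- coordinatewise bounds on iterates
  have hb0 : ∀ k j, |betaIter x y α γ Bk k j| ≤ B := by
    intro k j
    have h := norm_le_pi_norm (betaIter x y α γ Bk k) j
    rw [Real.norm_eq_abs] at h
    exact h.trans (htraj k).1
  have hbs : ∀ j, |βstar j| ≤ B := by
    intro j
    have h := norm_le_pi_norm βstar j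
    rw [Real.norm_eq_abs] at h
    exact h.trans hBstar
  -- the stochastic gradient in terms of HBop
  have hgeq : ∀ k, gIter x y α γ Bk k
      = HBop x (Bk k) (fun j => betaIter x y α γ Bk k j - βstar j) := by
    intro k; funext j
    simp only [gIter, gradBatch, HBop]
    congr 1
    refine Finset.sum_congr rfl (fun i _ => ?_)
    have h1 : dotp (x i) (fun l => betaIter x y α γ Bk k l - βstar l)
        = dotp (x i) (betaIter x y α γ Bk k) - y i := by
      rw [← hbstar i]
      simp only [dotp, ← Finset.sum_sub_distrib]
      exact Finset.sum_congr rfl (fun l _ => by ring)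
    rw [h1]
  -- uniform bound on the gradient coordinates
  have hgbound : ∀ k j, |gIter x y α γ Bk k j| ≤ Lc * (2*B) := by
    intro k j
    have h1 : ‖gIter x y α γ Bk k j‖ ≤ ‖gIter x y α γ Bk k‖ := norm_le_pi_norm _ j
    rw [Real.norm_eq_abs] at h1
    have h2 := (hH k (fun l => betaIter x y α γ Bk k l - βstar l)).2
    have h3 : ‖(fun l => betaIter x y α γ Bk k l - βstar l)‖ ≤ 2*B := by
      have he : (fun l => betaIter x y α γ Bk k l - βstar l)
          = betaIter x y α γ Bk k - βstar := rfl
      rw [he]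
      calc ‖betaIter x y α γ Bk k - βstar‖ ≤ ‖betaIter x y α γ Bk k‖ + ‖βstar‖ :=
            norm_sub_le _ _
        _ ≤ B + B := add_le_add (htraj k).1 hBstar
        _ = 2*B := by ring
    calc |gIter x y α γ Bk k j| ≤ ‖gIter x y α γ Bk k‖ := h1
      _ = ‖HBop x (Bk k) (fun l => betaIter x y α γ Bk k l - βstar l)‖ := by rw [hgeq k]
      _ ≤ Lc * ‖(fun l => betaIter x y α γ Bk k l - βstar l)‖ := h2
      _ ≤ Lc * (2*B) := by
          exact mul_le_mul_of_nonneg_left h3 hLc.le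
  have hγLB : ∀ k, γ k * (Lc * B) ≤ 1/100 := by
    intro k
    have := (htraj k).2
    calc γ k * (Lc*B) ≤ (1/100/(Lc*B)) * (Lc*B) := by
          exact mul_le_mul_of_nonneg_right this hLB.le
      _ = 1/100 := by field_simp
  have ht : ∀ k j, |γ k * gIter x y α γ Bk k j| ≤ 1/50 := by
    intro k j
    rw [abs_mul, abs_of_nonneg (hγ k)]
    calc γ k * |gIter x y α γ Bk k j| ≤ γ k * (Lc * (2*B)) :=
          mul_le_mul_of_nonneg_left (hgbound k j) (hγ k)
      _ = 2 * (γ k * (Lc * B)) := by ring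
      _ ≤ 2 * (1/100) := by have := hγLB k; linarith
      _ = 1/50 := by norm_num
  -- Witer recursion, coordinatewise
  have hW1succ : ∀ k j, (Witer x y α γ Bk (k+1)).1 j
      = (1 - γ k * gIter x y α γ Bk k j) * (Witer x y α γ Bk k).1 j := fun k j => rfl
  have hW2succ : ∀ k j, (Witer x y α γ Bk (k+1)).2 j
      = (1 + γ k * gIter x y α γ Bk k j) * (Witer x y α γ Bk k).2 j := fun k j => rfl
  -- positivity of the weights
  have hWpos : ∀ k, (∀ j, 0 < (Witer x y α γ Bk k).1 j) ∧
      (∀ j, 0 < (Witer x y α γ Bk k).2 j) := by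
    intro k
    induction k with
    | zero => exact ⟨hα, hα⟩
    | succ k ih =>
      have hfac := fun j => abs_le.1 (ht k j)
      constructor
      · intro j
        rw [hW1succ k j]
        have := (hfac j).2
        exact mul_pos (by linarith) (ih.1 j)
      · intro j
        rw [hW2succ k j]
        have := (hfac j).1
        exact mul_pos (by linarith) (ih.2 j)
  -- alphaSq recursion
  have hAsucc : ∀ k j, alphaSq x y α γ Bk (k+1) j
      = (1 - (γ k * gIter x y α γ Bk k j)^2) * alphaSq x y α γ Bk k j := by
    intro k j
    have h50 := abs_le.1 (ht k j)
    set t := γ k * gIter x y α γ Bk k j with htd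
    have h1t : (0:ℝ) < 1 - t := by linarith [h50.2]
    have h2t : (0:ℝ) < 1 + t := by linarith [h50.1]
    simp only [alphaSq, alphaPlusSq, alphaMinusSq, Finset.sum_range_succ, neg_add,
      Real.exp_add, ← htd]
    have hq : Real.exp (-(qplus t)) * Real.exp (-(qminus t)) = ((1-t)*(1+t))^2 := by
      rw [← Real.exp_add, qplus, qminus,
        show -(-2*t - Real.log ((1-t)^2)) + -(2*t - Real.log ((1+t)^2))
          = Real.log ((1-t)^2) + Real.log ((1+t)^2) from by ring,
        Real.exp_add, Real.exp_log (by positivity), Real.exp_log (by positivity)]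
      ring
    have key : (α j)^2 * (Real.exp (-(∑ l ∈ Finset.range k, qplus (γ l * gIter x y α γ Bk l j)))
          * Real.exp (-(qplus t)))
        * ((α j)^2 * (Real.exp (-(∑ l ∈ Finset.range k, qminus (γ l * gIter x y α γ Bk l j)))
          * Real.exp (-(qminus t))))
        = ((α j)^2 * Real.exp (-(∑ l ∈ Finset.range k, qplus (γ l * gIter x y α γ Bk l j)))
          * ((α j)^2 * Real.exp (-(∑ l ∈ Finset.range k, qminus (γ l * gIter x y α γ Bk l j)))))
          * ((1-t)*(1+t))^2 := by
      rw [← hq]; ring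
    rw [key, Real.sqrt_mul (by positivity), Real.sqrt_sq (by positivity)]
    ring
  -- alphaSq at 0
  have hA0 : ∀ j, alphaSq x y α γ Bk 0 j = (α j)^2 := by
    intro j
    simp only [alphaSq, alphaPlusSq, alphaMinusSq, Finset.range_zero, Finset.sum_empty,
      neg_zero, Real.exp_zero, mul_one]
    rw [← pow_add]
    rw [show (2+2 : ℕ) = 4 from rfl]
    rw [show (α j)^4 = ((α j)^2)^2 by ring]
    exact Real.sqrt_sq (sq_nonneg _)
  -- alphaSq positivity and bound
  have hAposle : ∀ k j, 0 < alphaSq x y α γ Bk k j ∧ alphaSq x y α γ Bk k j ≤ (α j)^2 := by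
    intro k j
    induction k with
    | zero => rw [hA0 j]; exact ⟨pow_pos (hα j) 2, le_refl _⟩
    | succ k ih =>
      rw [hAsucc k j]
      have h1 := ht k j
      have h2 : (γ k * gIter x y α γ Bk k j)^2 ≤ (1/50)^2 := by
        nlinarith [abs_nonneg (γ k * gIter x y α γ Bk k j),
          sq_abs (γ k * gIter x y α γ Bk k j)]
      constructor
      · apply mul_pos _ ih.1; nlinarith [sq_nonneg (γ k * gIter x y α γ Bk k j)]
      · calc (1 - (γ k * gIter x y α γ Bk k j)^2) * alphaSq x y α γ Bk k j
            ≤ 1 * alphaSq x y α γ Bk k j := by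
              apply mul_le_mul_of_nonneg_right _ ih.1.le
              nlinarith [sq_nonneg (γ k * gIter x y α γ Bk k j)]
          _ = alphaSq x y α γ Bk k j := one_mul _
          _ ≤ (α j)^2 := ih.2
  have hAB : ∀ k j, alphaSq x y α γ Bk k j ≤ B := fun k j =>
    (hAposle k j).2.trans (hαB j)
  -- alphaSq = w+ * w-
  have hAeq : ∀ k j, alphaSq x y α γ Bk k j
      = (Witer x y α γ Bk k).1 j * (Witer x y α γ Bk k).2 j := by
    intro k j
    induction k with
    | zero =>
      rw [hA0 j]
      show (α j)^2 = α j * α j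
      ring
    | succ k ih =>
      rw [hAsucc k j, hW1succ k j, hW2succ k j, ih]
      ring
  -- trajectory identities
  have harsinh : ∀ k j, Real.arsinh (betaIter x y α γ Bk k j / alphaSq x y α γ Bk k j)
      = Real.log ((Witer x y α γ Bk k).1 j / (Witer x y α γ Bk k).2 j) := by
    intro k j
    have h1 := (hWpos k).1 j
    have h2 := (hWpos k).2 j
    rw [hAeq k j]
    have hs : betaIter x y α γ Bk k j / ((Witer x y α γ Bk k).1 j * (Witer x y α γ Bk k).2 j)
        = Real.sinh (Real.log ((Witer x y α γ Bk k).1 j / (Witer x y α γ Bk k).2 j)) := by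
      rw [Real.sinh_eq, Real.exp_log (div_pos h1 h2), ← Real.log_inv,
        Real.exp_log (by positivity)]
      simp only [betaIter]
      field_simp
    rw [hs, Real.arsinh_sinh]
  have hsqrtt : ∀ k j, Real.sqrt ((betaIter x y α γ Bk k j)^2 + (alphaSq x y α γ Bk k j)^2)
      = (((Witer x y α γ Bk k).1 j)^2 + ((Witer x y α γ Bk k).2 j)^2)/2 := by
    intro k j
    have h1 := (hWpos k).1 j
    have h2 := (hWpos k).2 j
    rw [hAeq k j]
    rw [show (betaIter x y α γ Bk k j)^2 + ((Witer x y α γ Bk k).1 j * (Witer x y α γ Bk k).2 j)^2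
        = ((((Witer x y α γ Bk k).1 j)^2 + ((Witer x y α γ Bk k).2 j)^2)/2)^2 by
      simp only [betaIter]; ring]
    exact Real.sqrt_sq (by positivity)
  -- Efun on the trajectory
  have hEtraj : ∀ k j, Efun (βstar j) (betaIter x y α γ Bk k j) (alphaSq x y α γ Bk k j)
      = (1/2)*(βstar j * Real.arsinh (βstar j / alphaSq x y α γ Bk k j)
          - Real.sqrt ((βstar j)^2 + (alphaSq x y α γ Bk k j)^2))
        + (((Witer x y α γ Bk k).1 j)^2 + ((Witer x y α γ Bk k).2 j)^2)/4
        - (1/2)*(βstar j)*Real.log ((Witer x y α γ Bk k).1 j / (Witer x y α γ Bk k).2 j) := by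
    intro k j
    rw [Efun, harsinh k j, hsqrtt k j]
    simp only [betaIter]
    ring
  -- nonnegativity of the batch loss
  have hblnn : ∀ k, 0 ≤ batchLoss x y (Bk k) (betaIter x y α γ Bk k) := by
    intro k
    apply mul_nonneg (by positivity)
    exact Finset.sum_nonneg (fun i _ => sq_nonneg _)
  -- inner product identity: ⟨g, β - β*⟩ = 2 L_B(β)
  have hdd : ∀ k i, ∑ j, x i j * (betaIter x y α γ Bk k j - βstar j)
      = dotp (x i) (betaIter x y α γ Bk k) - y i := by
    intro k i
    rw [← hbstar i]
    simp only [dotp, ← Finset.sum_sub_distrib]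
    exact Finset.sum_congr rfl (fun l _ => by ring)
  have hmpos : ∀ k, (0:ℝ) < ((Bk k).card : ℝ) := by
    intro k; exact_mod_cast Finset.card_pos.2 (hBk k)
  have hswap : ∀ (k : ℕ) (v : Fin d → ℝ), ∑ j, gIter x y α γ Bk k j * v j
      = (1/((Bk k).card : ℝ)) * ∑ i ∈ Bk k,
          (dotp (x i) (betaIter x y α γ Bk k) - y i) * (∑ j, x i j * v j) := by
    intro k v
    simp only [gIter, gradBatch, Finset.mul_sum, Finset.sum_mul]
    rw [Finset.sum_comm]
    exact Finset.sum_congr rfl (fun i _ => Finset.sum_congr rfl (fun j _ => by ring))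
  have hinner : ∀ k, ∑ j, gIter x y α γ Bk k j * (betaIter x y α γ Bk k j - βstar j)
      = 2 * batchLoss x y (Bk k) (betaIter x y α γ Bk k) := by
    intro k
    rw [hswap k (fun j => betaIter x y α γ Bk k j - βstar j), batchLoss]
    have : ∑ i ∈ Bk k, (dotp (x i) (betaIter x y α γ Bk k) - y i)
          * (∑ j, x i j * (betaIter x y α γ Bk k j - βstar j))
        = ∑ i ∈ Bk k, (dotp (x i) (betaIter x y α γ Bk k) - y i)^2 := by
      refine Finset.sum_congr rfl (fun i _ => ?_)
      rw [hdd k i]; ring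
    rw [this]
    have hm := hmpos k
    field_simp
  -- Cauchy-Schwarz chain: Σ g² ≤ Lc * 2 L_B(β)
  have hSg : ∀ k, ∑ j, (gIter x y α γ Bk k j)^2
      ≤ Lc * (2 * batchLoss x y (Bk k) (betaIter x y α γ Bk k)) := by
    intro k
    have hm := hmpos k
    have hSnn : (0:ℝ) ≤ ∑ j, (gIter x y α γ Bk k j)^2 :=
      Finset.sum_nonneg (fun j _ => sq_nonneg _)
    -- Σ_i ⟨x_i, g⟩² = m * ⟨g, H g⟩ ≤ m * Lc * Σ g²
    have hgnorm2 : (norm2 (gIter x y α γ Bk k))^2 = ∑ j, (gIter x y α γ Bk k j)^2 :=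
      Real.sq_sqrt (Finset.sum_nonneg (fun j _ => sq_nonneg _))
    have hgH : ∑ j, gIter x y α γ Bk k j * HBop x (Bk k) (gIter x y α γ Bk k) j
        ≤ Lc * ∑ j, (gIter x y α γ Bk k j)^2 := by
      calc ∑ j, gIter x y α γ Bk k j * HBop x (Bk k) (gIter x y α γ Bk k) j
          ≤ norm2 (gIter x y α γ Bk k) * norm2 (HBop x (Bk k) (gIter x y α γ Bk k)) :=
            sum_cs _ _
        _ ≤ norm2 (gIter x y α γ Bk k) * (Lc * norm2 (gIter x y α γ Bk k)) :=
            mul_le_mul_of_nonneg_left (hH k _).1 (Real.sqrt_nonneg _)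
        _ = Lc * (norm2 (gIter x y α γ Bk k))^2 := by ring
        _ = Lc * ∑ j, (gIter x y α γ Bk k j)^2 := by rw [hgnorm2]
    have hfsum : ∑ i ∈ Bk k, (dotp (x i) (gIter x y α γ Bk k))^2
        = ((Bk k).card : ℝ) * ∑ j, gIter x y α γ Bk k j * HBop x (Bk k) (gIter x y α γ Bk k) j := by
      have L1 : ∀ i, (dotp (x i) (gIter x y α γ Bk k))^2
          = ∑ j, dotp (x i) (gIter x y α γ Bk k) * x i j * gIter x y α γ Bk k j := by
        intro i
        rw [pow_two]
        show dotp (x i) (gIter x y α γ Bk k) * (∑ j, x i j * gIter x y α γ Bk k j) = _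
        rw [Finset.mul_sum]
        exact Finset.sum_congr rfl (fun j _ => by ring)
      calc ∑ i ∈ Bk k, (dotp (x i) (gIter x y α γ Bk k))^2
          = ∑ i ∈ Bk k, ∑ j, dotp (x i) (gIter x y α γ Bk k) * x i j * gIter x y α γ Bk k j :=
            Finset.sum_congr rfl (fun i _ => L1 i)
        _ = ∑ j, ∑ i ∈ Bk k, dotp (x i) (gIter x y α γ Bk k) * x i j * gIter x y α γ Bk k j :=
            Finset.sum_comm
        _ = ((Bk k).card : ℝ) * ∑ j, gIter x y α γ Bk k j * HBop x (Bk k) (gIter x y α γ Bk k) j := by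
            rw [Finset.mul_sum]
            refine Finset.sum_congr rfl (fun j _ => ?_)
            simp only [HBop]
            rw [show ((Bk k).card:ℝ) * (gIter x y α γ Bk k j * (1/((Bk k).card:ℝ)
                * ∑ i ∈ Bk k, dotp (x i) (gIter x y α γ Bk k) * x i j))
              = gIter x y α γ Bk k j * ∑ i ∈ Bk k, dotp (x i) (gIter x y α γ Bk k) * x i j from by
                field_simp]
            rw [Finset.mul_sum]
            exact Finset.sum_congr rfl (fun i _ => by ring)
    have hseq : ∑ j, (gIter x y α γ Bk k j)^2
        = (1/((Bk k).card:ℝ)) * ∑ i ∈ Bk k,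
            (dotp (x i) (betaIter x y α γ Bk k) - y i) * dotp (x i) (gIter x y α γ Bk k) := by
      have h1 : ∑ j, (gIter x y α γ Bk k j)^2
          = ∑ j, gIter x y α γ Bk k j * gIter x y α γ Bk k j :=
        Finset.sum_congr rfl (fun j _ => by ring)
      rw [h1, hswap k (gIter x y α γ Bk k)]
      rfl
    have hCS := Finset.sum_mul_sq_le_sq_mul_sq (Bk k)
      (fun i => dotp (x i) (betaIter x y α γ Bk k) - y i)
      (fun i => dotp (x i) (gIter x y α γ Bk k))
    have hf2 : ∑ i ∈ Bk k, (dotp (x i) (gIter x y α γ Bk k))^2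
        ≤ ((Bk k).card : ℝ) * (Lc * ∑ j, (gIter x y α γ Bk k j)^2) := by
      rw [hfsum]
      exact mul_le_mul_of_nonneg_left hgH hm.le
    have h2bl : 2 * batchLoss x y (Bk k) (betaIter x y α γ Bk k)
        = (1/((Bk k).card:ℝ)) * ∑ i ∈ Bk k, (dotp (x i) (betaIter x y α γ Bk k) - y i)^2 := by
      rw [batchLoss]; field_simp
    have he2nn : (0:ℝ) ≤ ∑ i ∈ Bk k, (dotp (x i) (betaIter x y α γ Bk k) - y i)^2 :=
      Finset.sum_nonneg (fun i _ => sq_nonneg _)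
    have hS2 : (∑ j, (gIter x y α γ Bk k j)^2)^2
        ≤ Lc * (2 * batchLoss x y (Bk k) (betaIter x y α γ Bk k))
          * ∑ j, (gIter x y α γ Bk k j)^2 := by
      calc (∑ j, (gIter x y α γ Bk k j)^2)^2
          = (1/((Bk k).card:ℝ))^2 * (∑ i ∈ Bk k,
              (dotp (x i) (betaIter x y α γ Bk k) - y i) * dotp (x i) (gIter x y α γ Bk k))^2 := by
            rw [hseq]; ring
        _ ≤ (1/((Bk k).card:ℝ))^2 * ((∑ i ∈ Bk k, (dotp (x i) (betaIter x y α γ Bk k) - y i)^2)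
             * ∑ i ∈ Bk k, (dotp (x i) (gIter x y α γ Bk k))^2) := by
            exact mul_le_mul_of_nonneg_left hCS (by positivity)
        _ ≤ (1/((Bk k).card:ℝ))^2 * ((∑ i ∈ Bk k, (dotp (x i) (betaIter x y α γ Bk k) - y i)^2)
             * (((Bk k).card : ℝ) * (Lc * ∑ j, (gIter x y α γ Bk k j)^2))) := by
            apply mul_le_mul_of_nonneg_left _ (by positivity)
            exact mul_le_mul_of_nonneg_left hf2 he2nn
        _ = Lc * ((1/((Bk k).card:ℝ)) * ∑ i ∈ Bk k,
              (dotp (x i) (betaIter x y α γ Bk k) - y i)^2) * ∑ j, (gIter x y α γ Bk k j)^2 := by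
            field_simp
        _ = Lc * (2 * batchLoss x y (Bk k) (betaIter x y α γ Bk k))
              * ∑ j, (gIter x y α γ Bk k j)^2 := by rw [← h2bl]
    rcases hSnn.eq_or_lt with hS0 | hSpos
    · rw [← hS0]
      exact mul_nonneg hLc.le (by linarith [hblnn k])
    · nlinarith [hS2, hSpos]
  -- the one-step descent inequality
  have key : ∀ k j, Efun (βstar j) (betaIter x y α γ Bk (k+1) j) (alphaSq x y α γ Bk (k+1) j)
      - Efun (βstar j) (betaIter x y α γ Bk k j) (alphaSq x y α γ Bk k j)
      ≤ -((γ k * gIter x y α γ Bk k j) * (betaIter x y α γ Bk k j - βstar j))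
        + 3*B*(γ k * gIter x y α γ Bk k j)^2 := by
    intro k j
    have hsq := hsqrtt k j
    have hβB := hb0 k j
    have hβj : betaIter x y α γ Bk k j
        = ((Witer x y α γ Bk k).1 j^2 - (Witer x y α γ Bk k).2 j^2)/2 := rfl
    rw [hβj] at hsq hβB
    rw [hEtraj (k+1) j, hEtraj k j, hW1succ k j, hW2succ k j, hAsucc k j, hβj]
    exact key_ineq (γ k * gIter x y α γ Bk k j) ((Witer x y α γ Bk k).1 j)
      ((Witer x y α γ Bk k).2 j) (alphaSq x y α γ Bk k j) (βstar j) B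
      (ht k j) ((hWpos k).1 j) ((hWpos k).2 j) (hAposle k j).1 (hAB k j) (hbs j) hβB hB hsq
  have hstep : ∀ k, DhK x y α γ Bk (k+1) βstar (betaIter x y α γ Bk (k+1))
      + γ k * batchLoss x y (Bk k) (betaIter x y α γ Bk k)
      ≤ DhK x y α γ Bk k βstar (betaIter x y α γ Bk k) := by
    intro k
    have hd1 : DhK x y α γ Bk (k+1) βstar (betaIter x y α γ Bk (k+1))
        - DhK x y α γ Bk k βstar (betaIter x y α γ Bk k)
        = ∑ j, (Efun (βstar j) (betaIter x y α γ Bk (k+1) j) (alphaSq x y α γ Bk (k+1) j)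
            - Efun (βstar j) (betaIter x y α γ Bk k j) (alphaSq x y α γ Bk k j)) := by
      rw [DhK_eq_sum, DhK_eq_sum, ← Finset.sum_sub_distrib]
    have hd2 : ∑ j, (Efun (βstar j) (betaIter x y α γ Bk (k+1) j) (alphaSq x y α γ Bk (k+1) j)
            - Efun (βstar j) (betaIter x y α γ Bk k j) (alphaSq x y α γ Bk k j))
        ≤ -(γ k * ∑ j, gIter x y α γ Bk k j * (betaIter x y α γ Bk k j - βstar j))
          + 3*B*(γ k)^2 * ∑ j, (gIter x y α γ Bk k j)^2 := by
      calc ∑ j, (Efun (βstar j) (betaIter x y α γ Bk (k+1) j) (alphaSq x y α γ Bk (k+1) j)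
            - Efun (βstar j) (betaIter x y α γ Bk k j) (alphaSq x y α γ Bk k j))
          ≤ ∑ j, (-((γ k * gIter x y α γ Bk k j) * (betaIter x y α γ Bk k j - βstar j))
              + 3*B*(γ k * gIter x y α γ Bk k j)^2) :=
            Finset.sum_le_sum (fun j _ => key k j)
        _ = -(γ k * ∑ j, gIter x y α γ Bk k j * (betaIter x y α γ Bk k j - βstar j))
              + 3*B*(γ k)^2 * ∑ j, (gIter x y α γ Bk k j)^2 := by
            rw [Finset.sum_add_distrib]
            congr 1
            · rw [Finset.mul_sum, ← Finset.sum_neg_distrib]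
              exact Finset.sum_congr rfl (fun j _ => by ring)
            · rw [Finset.mul_sum]
              exact Finset.sum_congr rfl (fun j _ => by ring)
    rw [hinner k] at hd2
    have hd3 : 3*B*(γ k)^2 * ∑ j, (gIter x y α γ Bk k j)^2
        ≤ 3*B*(γ k)^2 * (Lc * (2 * batchLoss x y (Bk k) (betaIter x y α γ Bk k))) :=
      mul_le_mul_of_nonneg_left (hSg k) (by positivity)
    have hγbl : 0 ≤ γ k * batchLoss x y (Bk k) (betaIter x y α γ Bk k) :=
      mul_nonneg (hγ k) (hblnn k)
    have hsmall : 3*B*(γ k)^2 * (Lc * (2 * batchLoss x y (Bk k) (betaIter x y α γ Bk k)))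
        ≤ γ k * batchLoss x y (Bk k) (betaIter x y α γ Bk k) := by
      have h1 := hγLB k
      nlinarith [hγbl, hblnn k, hγ k]
    linarith [hd1, hd2, hd3, hsmall]
  -- nonnegativity of the Bregman divergence
  have hDnn : ∀ k, 0 ≤ DhK x y α γ Bk k βstar (betaIter x y α γ Bk k) := by
    intro k
    rw [DhK_eq_sum]
    exact Finset.sum_nonneg (fun j _ => Efun_nonneg (hAposle k j).1)
  -- value at time 0
  have hD0 : DhK x y α γ Bk 0 βstar (betaIter x y α γ Bk 0)
      = psiSq (fun j => (α j)^2) βstar := by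
    rw [DhK_eq_sum, psiSq, Finset.mul_sum]
    refine Finset.sum_congr rfl (fun j _ => ?_)
    have hβ0 : betaIter x y α γ Bk 0 j = 0 := by
      show ((α j)^2 - (α j)^2)/2 = 0
      ring
    rw [hβ0, hA0 j, Efun]
    rw [show (0:ℝ)^2 + ((α j)^2)^2 = ((α j)^2)^2 by ring]
    rw [Real.sqrt_sq (sq_nonneg _), zero_div, Real.arsinh_zero]
    ring
  -- partial sums are controlled
  have hps : ∀ K, (∑ k ∈ Finset.range K,
        γ k * batchLoss x y (Bk k) (betaIter x y α γ Bk k))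
      + DhK x y α γ Bk K βstar (betaIter x y α γ Bk K)
      ≤ psiSq (fun j => (α j)^2) βstar := by
    intro K
    induction K with
    | zero => simp [hD0.symm.le, hD0]
    | succ K ih =>
      rw [Finset.sum_range_succ]
      have := hstep K
      linarith
  have hpsum : ∀ K, ∑ k ∈ Finset.range K,
      γ k * batchLoss x y (Bk k) (betaIter x y α γ Bk k)
      ≤ psiSq (fun j => (α j)^2) βstar := by
    intro K
    have := hps K
    have := hDnn K
    linarith
  have hnn : ∀ k, 0 ≤ γ k * batchLoss x y (Bk k) (betaIter x y α γ Bk k) :=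
    fun k => mul_nonneg (hγ k) (hblnn k)
  exact ⟨hD0, summable_of_sum_range_le hnn hpsum,
    Real.tsum_le_of_sum_range_le hnn hpsum⟩

end
end

section
/- Define the gain vector Gain ∈ [0,∞]^d coordinatewise by Gain_i = Σ_{k=0}^∞ q(γ_k ∂_i L_{B_k}(β_k)). If ‖γ_k ∇L_{B_k}(β_k)‖_∞ ≤ 1/2 for all k ≥ 0, then every coordinate of Gain is nonnegative and Σ_{k=0}^∞ γ_k² ‖∇L_{B_k}(β_k)‖₂² ≤ Σ_{i=1}^d Gain_i ≤ 2 Σ_{k=0}^∞ γ_k² ‖∇L_{B_k}(β_k)‖₂², where both sides may be infinite. -/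
/-! Since `q(t) = -log (1 - t²)`, the elementary bounds `s ≤ -log (1 - s) ≤ 2 s` for
`0 ≤ s ≤ 1/2`, taken at `s = (γ_k ∂_i L_{B_k}(β_k))² ≤ 1/4`, compare each term of `Gain_i` with
the corresponding coordinate of `γ_k² ‖∇L_{B_k}(β_k)‖₂²`; sums of nonnegative terms in `[0, ∞]`
can be reordered and compared termwise. -/

open Finset Filter Real

noncomputable section

lemma qfun_eq_neg_log (t : ℝ) : qfun t = -log (1 - t ^ 2) := by
  rw [qfun, log_pow]
  push_cast
  ring

lemma sq_le_qfun {t : ℝ} (ht : t ^ 2 < 1) : t ^ 2 ≤ qfun t := by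
  rw [qfun_eq_neg_log]
  linarith [log_le_sub_one_of_pos (sub_pos.2 ht)]

lemma qfun_le_two_mul_sq {t : ℝ} (ht : t ^ 2 ≤ 1 / 2) : qfun t ≤ 2 * t ^ 2 := by
  have hpos : 0 < 1 - t ^ 2 := by linarith
  have hinv : (1 - t ^ 2)⁻¹ ≤ 1 + 2 * t ^ 2 := by
    rw [inv_le_iff_one_le_mul₀ hpos]
    nlinarith [sq_nonneg t]
  rw [qfun_eq_neg_log]
  linarith [one_sub_inv_le_log_of_pos hpos]

lemma ENNReal.tsum_ofReal_sum_eq_sum_tsum {ι : Type*} (s : Finset ι) {f : ℕ → ι → ℝ}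
    (hf : ∀ k i, 0 ≤ f k i) :
    ∑' k, ENNReal.ofReal (∑ i ∈ s, f k i) = ∑ i ∈ s, ∑' k, ENNReal.ofReal (f k i) := by
  simp_rw [ENNReal.ofReal_sum_of_nonneg fun i _ => hf _ i]
  exact Summable.tsum_finsetSum fun _ _ => ENNReal.summable

theorem stmt7_general (d n : ℕ) (x : Fin n → Fin d → ℝ) (y : Fin n → ℝ)
    (α : Fin d → ℝ) (γ : ℕ → ℝ) (Bk : ℕ → Finset (Fin n))
    (hstep : ∀ k j, |γ k * gIter x y α γ Bk k j| ≤ 1 / 2) :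
    (∀ k j, 0 ≤ qfun (γ k * gIter x y α γ Bk k j)) ∧
    (∑' k : ℕ, ENNReal.ofReal (γ k ^ 2 * ∑ j, (gIter x y α γ Bk k j) ^ 2)) ≤
      (∑ i : Fin d, ∑' k : ℕ, ENNReal.ofReal (qfun (γ k * gIter x y α γ Bk k i))) ∧
    (∑ i : Fin d, ∑' k : ℕ, ENNReal.ofReal (qfun (γ k * gIter x y α γ Bk k i))) ≤
      2 * ∑' k : ℕ, ENNReal.ofReal (γ k ^ 2 * ∑ j, (gIter x y α γ Bk k j) ^ 2) := by
  set u : ℕ → Fin d → ℝ := fun k j => γ k * gIter x y α γ Bk k j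
  have hsq : ∀ k j, u k j ^ 2 ≤ 1 / 2 := fun k j => by
    rw [← sq_abs]
    nlinarith [hstep k j, abs_nonneg (u k j)]
  have hlower : ∀ k j, u k j ^ 2 ≤ qfun (u k j) := fun k j => sq_le_qfun (by linarith [hsq k j])
  have hupper : ∀ k j, qfun (u k j) ≤ 2 * u k j ^ 2 := fun k j => qfun_le_two_mul_sq (hsq k j)
  have hnorm : ∑' k, ENNReal.ofReal (γ k ^ 2 * ∑ j, gIter x y α γ Bk k j ^ 2) =
      ∑ j, ∑' k, ENNReal.ofReal (u k j ^ 2) := by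
    simp_rw [Finset.mul_sum, ← mul_pow]
    exact ENNReal.tsum_ofReal_sum_eq_sum_tsum _ fun k j => sq_nonneg (u k j)
  refine ⟨fun k j => (sq_nonneg _).trans (hlower k j), ?_, ?_⟩
  · rw [hnorm]
    gcongr with j _ k
    exact hlower k j
  · rw [hnorm, Finset.mul_sum]
    gcongr with j _
    rw [← ENNReal.tsum_mul_left]
    refine ENNReal.tsum_le_tsum fun k => ?_
    rw [← ENNReal.ofReal_ofNat 2, ← ENNReal.ofReal_mul zero_le_two]
    exact ENNReal.ofReal_le_ofReal (hupper k j)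

/-- the gain vector `Gain_i = ∑_k q(γ_k ∂_i L_{B_k}(β_k))` (valued in `[0,∞]`) has
nonnegative coordinates and its total mass is within a factor `2` of
`∑_k γ_k²‖∇L_{B_k}(β_k)‖₂²`, both sides being possibly infinite. -/
theorem stmt7 (d n : ℕ) (x : Fin n → Fin d → ℝ) (y : Fin n → ℝ)
    (α : Fin d → ℝ) (hα : ∀ j, 0 < α j)
    (γ : ℕ → ℝ) (hγ : ∀ k, 0 ≤ γ k)
    (Bk : ℕ → Finset (Fin n)) (hBk : ∀ k, (Bk k).Nonempty)
    (hstep : ∀ k j, |γ k * gIter x y α γ Bk k j| ≤ 1 / 2) :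
    (∀ k j, 0 ≤ qfun (γ k * gIter x y α γ Bk k j)) ∧
    (∑' k : ℕ, ENNReal.ofReal (γ k ^ 2 * ∑ j, (gIter x y α γ Bk k j) ^ 2)) ≤
      (∑ i : Fin d, ∑' k : ℕ, ENNReal.ofReal (qfun (γ k * gIter x y α γ Bk k i))) ∧
    (∑ i : Fin d, ∑' k : ℕ, ENNReal.ofReal (qfun (γ k * gIter x y α γ Bk k i))) ≤
      2 * ∑' k : ℕ, ENNReal.ofReal (γ k ^ 2 * ∑ j, (gIter x y α γ Bk k j) ^ 2) :=
  stmt7_general d n x y α γ Bk hstep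

end
end

section
/- Let (u_k, v_k) follow mini-batch SGD on the u⊙v parametrisation: u_0 = √2·α, v_0 = 0, and u_{k+1} = u_k − γ_k ∇L_{B_k}(u_k ⊙ v_k) ⊙ v_k, v_{k+1} = v_k − γ_k ∇L_{B_k}(u_k ⊙ v_k) ⊙ u_k. Let (w_{+,k}, w_{−,k}) follow mini-batch SGD on the ½(w₊² − w₋²) parametrisation with the same stepsizes γ_k and the same batches B_k: w_{±,0} = α and w_{±,k+1} = (1 ∓ γ_k ∇L_{B_k}(½(w_{+,k}² − w_{−,k}²))) ⊙ w_{±,k}. Then for all k ≥ 0, u_k ⊙ v_k = ½(w_{+,k}² − w_{−,k}²). -/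
open Finset Filter Real

noncomputable section

/-- Mini-batch SGD on the `u ⊙ v` parametrisation, initialised at `u₀ = √2·α`, `v₀ = 0`. -/
def UViter {d n : ℕ} (x : Fin n → Fin d → ℝ) (y : Fin n → ℝ) (α : Fin d → ℝ)
    (γ : ℕ → ℝ) (Bk : ℕ → Finset (Fin n)) : ℕ → (Fin d → ℝ) × (Fin d → ℝ)
  | 0 => (fun j => Real.sqrt 2 * α j, fun _ => 0)
  | k + 1 =>
      let uv := UViter x y α γ Bk k
      let β : Fin d → ℝ := fun j => uv.1 j * uv.2 j
      let g := gradBatch x y (Bk k) β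
      (fun j => uv.1 j - γ k * g j * uv.2 j, fun j => uv.2 j - γ k * g j * uv.1 j)

/-!
In the rotated coordinates `u = (w₊ + w₋)/√2`, `v = (w₊ − w₋)/√2` one has `u ⊙ v = ½(w₊² − w₋²)`,
and the step `(u, v) ↦ (u − c v, v − c u)` becomes `(w₊, w₋) ↦ ((1 − c) w₊, (1 + c) w₋)`. The
initialisations correspond as well, so by induction the two SGD runs are the same sequence seen in
two coordinate systems.
-/

lemma add_div_sqrt_two_mul_sub_div_sqrt_two (p q : ℝ) :
    (p + q) / √2 * ((p - q) / √2) = (p ^ 2 - q ^ 2) / 2 := by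
  rw [div_mul_div_comm, Real.mul_self_sqrt zero_le_two]
  ring

lemma add_div_sqrt_two_sub_mul_sub_div_sqrt_two (p q c : ℝ) :
    (p + q) / √2 - c * ((p - q) / √2) = ((1 - c) * p + (1 + c) * q) / √2 := by
  ring

lemma sub_div_sqrt_two_sub_mul_add_div_sqrt_two (p q c : ℝ) :
    (p - q) / √2 - c * ((p + q) / √2) = ((1 - c) * p - (1 + c) * q) / √2 := by
  ring

section

variable {d n : ℕ} (x : Fin n → Fin d → ℝ) (y : Fin n → ℝ) (α : Fin d → ℝ)
  (γ : ℕ → ℝ) (Bk : ℕ → Finset (Fin n))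

theorem UViter_eq_rotate_Witer (k : ℕ) :
    UViter x y α γ Bk k =
      (fun j => ((Witer x y α γ Bk k).1 j + (Witer x y α γ Bk k).2 j) / √2,
       fun j => ((Witer x y α γ Bk k).1 j - (Witer x y α γ Bk k).2 j) / √2) := by
  induction k with
  | zero =>
    ext j
    · simp only [UViter, Witer]
      rw [eq_div_iff (by positivity), mul_right_comm, Real.mul_self_sqrt zero_le_two]
      ring
    · simp [UViter, Witer]
  | succ k ih =>
    have hβ : (fun j => (UViter x y α γ Bk k).1 j * (UViter x y α γ Bk k).2 j) =
        fun j => ((Witer x y α γ Bk k).1 j ^ 2 - (Witer x y α γ Bk k).2 j ^ 2) / 2 := by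
      simp only [ih, add_div_sqrt_two_mul_sub_div_sqrt_two]
    ext j
    · simp only [UViter, Witer, hβ]
      rw [ih, add_div_sqrt_two_sub_mul_sub_div_sqrt_two]
    · simp only [UViter, Witer, hβ]
      rw [ih, sub_div_sqrt_two_sub_mul_add_div_sqrt_two]

end

theorem stmt9_general (d n : ℕ) (x : Fin n → Fin d → ℝ) (y : Fin n → ℝ)
    (α : Fin d → ℝ)
    (γ : ℕ → ℝ)
    (Bk : ℕ → Finset (Fin n)) :
    ∀ k j, (UViter x y α γ Bk k).1 j * (UViter x y α γ Bk k).2 j =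
      betaIter x y α γ Bk k j := by
  intro k j
  rw [UViter_eq_rotate_Witer]
  exact add_div_sqrt_two_mul_sub_div_sqrt_two _ _

/-- the `u ⊙ v` parametrisation and the `½(w₊² − w₋²)` parametrisation, run with
the same stepsizes and batches, produce the same predictor iterates. -/
theorem stmt9 (d n : ℕ) (x : Fin n → Fin d → ℝ) (y : Fin n → ℝ)
    (α : Fin d → ℝ) (hα : ∀ j, 0 < α j)
    (γ : ℕ → ℝ) (hγ : ∀ k, 0 ≤ γ k)
    (Bk : ℕ → Finset (Fin n)) (hBk : ∀ k, (Bk k).Nonempty) :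
    ∀ k j, (UViter x y α γ Bk k).1 j * (UViter x y α γ Bk k).2 j =
      betaIter x y α γ Bk k j :=
  stmt9_general d n x y α γ Bk

end
end

section
/- Fix k ≥ 0 and suppose ‖γ_ℓ ∇L_{B_ℓ}(β_ℓ)‖_∞ ≤ 1/2 for all ℓ ≤ k. Then for every β ∈ ℝ^d, |h_{k+1}(β) − h_k(β)| ≤ 8 L γ_k² L_{B_k}(β_k) ‖β‖_∞. -/
open Finset Filter Real

noncomputable section

/-! ### Auxiliary lemmas -/

lemma aux_arsinh_ratio {P M : ℝ} (hP : 0 < P) (hM : 0 < M) :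
    Real.arsinh ((P - M) / (2 * Real.sqrt (P * M))) = Real.log (P / M) / 2 := by
  have hsP : 0 < Real.sqrt P := Real.sqrt_pos.2 hP
  have hsM : 0 < Real.sqrt M := Real.sqrt_pos.2 hM
  have hr : 0 < Real.sqrt (P / M) := Real.sqrt_pos.2 (div_pos hP hM)
  have key : (P - M) / (2 * Real.sqrt (P * M))
      = (Real.sqrt (P / M) - (Real.sqrt (P / M))⁻¹) / 2 := by
    rw [Real.sqrt_div hP.le, Real.sqrt_mul hP.le, inv_div]
    have h1 : Real.sqrt P * Real.sqrt P = P := Real.mul_self_sqrt hP.le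
    have h2 : Real.sqrt M * Real.sqrt M = M := Real.mul_self_sqrt hM.le
    field_simp
    ring_nf
    rw [Real.sq_sqrt hP.le, Real.sq_sqrt hM.le]
  rw [key, ← Real.sinh_log hr, Real.arsinh_sinh, Real.log_sqrt (div_pos hP hM).le]

lemma aux_qsum {t : ℝ} (h : |t| ≤ 1/2) : qplus t + qminus t = 2 * qfun t := by
  have h1 : (0:ℝ) < 1 - t := by cases' abs_le.1 h with a b; linarith
  have h2 : (0:ℝ) < 1 + t := by cases' abs_le.1 h with a b; linarith
  have he : (1 - t^2) = (1-t)*(1+t) := by ring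
  simp only [qplus, qminus, qfun, Real.log_pow, he, Real.log_mul h1.ne' h2.ne']
  push_cast
  ring

lemma aux_exp_qfun {t : ℝ} (h : |t| ≤ 1/2) :
    Real.exp (qfun t) = (1 - t^2)⁻¹ := by
  have h1 : (0:ℝ) < 1 - t^2 := by nlinarith [abs_le.1 h |>.1, abs_le.1 h |>.2]
  have : qfun t = Real.log ((1 - t^2)⁻¹) := by
    rw [qfun, Real.log_pow, Real.log_inv]; push_cast; ring
  rw [this, Real.exp_log (by positivity)]

lemma aux_qfun_nonneg {t : ℝ} (h : |t| ≤ 1/2) : 0 ≤ qfun t := by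
  have h1 : (0:ℝ) < 1 - t^2 := by nlinarith [abs_le.1 h |>.1, abs_le.1 h |>.2]
  have hm : (1 - t^2) * (1 - t^2)⁻¹ = 1 := mul_inv_cancel₀ h1.ne'
  have h2 : (1:ℝ) ≤ (1 - t^2)⁻¹ := by nlinarith [sq_nonneg t, inv_nonneg.2 h1.le]
  rw [← Real.exp_le_exp, Real.exp_zero, aux_exp_qfun h]; exact h2

lemma aux_exp_qfun_sub_one {t : ℝ} (h : |t| ≤ 1/2) :
    Real.exp (qfun t) - 1 ≤ (4/3) * t^2 := by
  have h1 : (3/4:ℝ) ≤ 1 - t^2 := by nlinarith [abs_le.1 h |>.1, abs_le.1 h |>.2]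
  have h0 : (0:ℝ) < 1 - t^2 := by linarith
  have hm : (1 - t^2) * (1 - t^2)⁻¹ = 1 := mul_inv_cancel₀ h0.ne'
  have hz : (0:ℝ) ≤ (1 - t^2)⁻¹ := inv_nonneg.2 h0.le
  have h43 : (1 - t^2)⁻¹ ≤ 4/3 := by nlinarith
  rw [aux_exp_qfun h]
  nlinarith [sq_nonneg t]

lemma aux_delta_bound {t : ℝ} (h : |t| ≤ 1/2) :
    |(qminus t - qplus t)/4| ≤ t^2 := by
  have h1 : (0:ℝ) < 1 - t := by cases' abs_le.1 h with a b; linarith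
  have h2 : (0:ℝ) < 1 + t := by cases' abs_le.1 h with a b; linarith
  have hb1 := abs_le.1 h |>.1
  have hb2 := abs_le.1 h |>.2
  set u := (1 + t)⁻¹ with hu
  set v := (1 - t)⁻¹ with hv
  have m1 : (1 - t) * v = 1 := mul_inv_cancel₀ h1.ne'
  have m2 : (1 + t) * u = 1 := mul_inv_cancel₀ h2.ne'
  have la : Real.log (1 - t) ≤ -t := by
    have := Real.log_le_sub_one_of_pos h1; linarith
  have lb : Real.log (1 + t) ≤ t := by
    have := Real.log_le_sub_one_of_pos h2; linarith
  have lc : 1 - v ≤ Real.log (1 - t) := by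
    have := Real.log_le_sub_one_of_pos (inv_pos.2 h1)
    rw [Real.log_inv] at this; linarith
  have ld : 1 - u ≤ Real.log (1 + t) := by
    have := Real.log_le_sub_one_of_pos (inv_pos.2 h2)
    rw [Real.log_inv] at this; linarith
  have hcub1 : (0:ℝ) ≤ t^2 * (2*t + 1) := by nlinarith [sq_nonneg t]
  have hcub2 : (0:ℝ) ≤ t^2 * (1 - 2*t) := by nlinarith [sq_nonneg t]
  have hkey1 : u ≤ 2*t^2 - t + 1 := by nlinarith [m2, hcub1]
  have hkey2 : v ≤ 2*t^2 + t + 1 := by nlinarith [m1, hcub2]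
  have expand : (qminus t - qplus t)/4
      = t + Real.log (1 - t) / 2 - Real.log (1 + t) / 2 := by
    simp only [qminus, qplus, Real.log_pow]; push_cast; ring
  rw [expand, abs_le]
  constructor <;> linarith

lemma aux_hasDeriv (β : ℝ) {s : ℝ} (hs : 0 < s) :
    HasDerivAt (fun u => (β * Real.arsinh (β / u) - Real.sqrt (β^2 + u^2) + u) / 2)
      ((1 - Real.sqrt (β^2 + s^2) / s) / 2) s := by
  have hR : (0:ℝ) < β^2 + s^2 := by positivity
  have hRs : 0 < Real.sqrt (β^2 + s^2) := Real.sqrt_pos.2 hR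
  have h1 : HasDerivAt (fun u : ℝ => β / u) (β * -(s^2)⁻¹) s := by
    simpa [div_eq_mul_inv] using (hasDerivAt_inv hs.ne').const_mul β
  have h2 : HasDerivAt (fun u : ℝ => Real.arsinh (β / u))
      ((Real.sqrt (1 + (β/s)^2))⁻¹ * (β * -(s^2)⁻¹)) s :=
    (Real.hasDerivAt_arsinh (β/s)).comp s h1
  have h3 : HasDerivAt (fun u : ℝ => β^2 + u^2) (2*s) s := by
    simpa using ((hasDerivAt_pow 2 s).const_add (β^2))
  have h4 : HasDerivAt (fun u : ℝ => Real.sqrt (β^2 + u^2))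
      (1 / (2 * Real.sqrt (β^2 + s^2)) * (2*s)) s :=
    (Real.hasDerivAt_sqrt hR.ne').comp s h3
  have h5 := (((h2.const_mul β).sub h4).add (hasDerivAt_id s)).div_const 2
  refine HasDerivAt.congr_deriv h5 ?_
  symm
  have hsq : Real.sqrt (1 + (β/s)^2) = Real.sqrt (β^2 + s^2) / s := by
    rw [show 1 + (β/s)^2 = (β^2 + s^2)/s^2 by field_simp; ring,
      Real.sqrt_div hR.le, Real.sqrt_sq hs.le]
  rw [hsq]
  have hq : Real.sqrt (β^2 + s^2) * Real.sqrt (β^2 + s^2) = β^2 + s^2 :=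
    Real.mul_self_sqrt hR.le
  field_simp
  linear_combination (-1) * hq

lemma aux_mvt (β b c : ℝ) (hb : 0 < b) (hbc : b ≤ c) :
    |(β * Real.arsinh (β / c) - Real.sqrt (β^2 + c^2) + c) / 2
      - (β * Real.arsinh (β / b) - Real.sqrt (β^2 + b^2) + b) / 2|
      ≤ (|β| / (2*b)) * (c - b) := by
  have key := Convex.norm_image_sub_le_of_norm_hasDerivWithin_le
    (f := fun u => (β * Real.arsinh (β / u) - Real.sqrt (β^2 + u^2) + u) / 2)
    (f' := fun u => (1 - Real.sqrt (β^2 + u^2) / u) / 2)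
    (s := Set.Icc b c) (C := |β| / (2*b)) ?_ ?_ (convex_Icc b c)
    (Set.left_mem_Icc.2 hbc) (Set.right_mem_Icc.2 hbc)
  · simpa [Real.norm_eq_abs, abs_of_nonneg (sub_nonneg.2 hbc)] using key
  · intro u hu
    exact (aux_hasDeriv β (lt_of_lt_of_le hb hu.1)).hasDerivWithinAt
  · intro u hu
    have hu0 : 0 < u := lt_of_lt_of_le hb hu.1
    have hR : (0:ℝ) < β^2 + u^2 := by positivity
    set R := Real.sqrt (β^2 + u^2) with hRdef
    have hge : u ≤ R := by
      have : u^2 ≤ β^2 + u^2 := by nlinarith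
      nlinarith [Real.sq_sqrt hR.le, Real.sqrt_nonneg (β^2+u^2)]
    have hle : R ≤ u + |β| := by
      nlinarith [Real.sq_sqrt hR.le, Real.sqrt_nonneg (β^2+u^2), abs_nonneg β,
        sq_abs β, hu0]
    show |(1 - R / u) / 2| ≤ |β| / (2*b)
    rw [abs_of_nonpos (by
      have h1 : 1 ≤ R/u := (one_le_div hu0).2 hge
      linarith)]
    have key : R/u - 1 ≤ |β|/b := by
      rw [div_sub_one hu0.ne', div_le_div_iff₀ hu0 hb]
      nlinarith [mul_le_mul_of_nonneg_right (show R - u ≤ |β| by linarith) hb.le,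
        mul_le_mul_of_nonneg_left hu.1 (abs_nonneg β)]
    have h2 : |β|/(2*b) = (|β|/b)/2 := by ring
    rw [h2]
    linarith

lemma aux_dotp_le (d : ℕ) (u v : Fin d → ℝ) : dotp u v ≤ norm2 u * norm2 v :=
  Real.sum_mul_le_sqrt_mul_sqrt _ u v

lemma aux_grad_sq (d n : ℕ) (x : Fin n → Fin d → ℝ) (y : Fin n → ℝ)
    (B : Finset (Fin n)) (hB : B.Nonempty) (β : Fin d → ℝ)
    (Lc : ℝ) (hLc : 0 < Lc)
    (hH : norm2 (HBop x B (gradBatch x y B β)) ≤ Lc * norm2 (gradBatch x y B β)) :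
    ∑ j, (gradBatch x y B β j)^2 ≤ 2 * Lc * batchLoss x y B β := by
  set g := gradBatch x y B β with hg
  set c : ℝ := (B.card : ℝ) with hc
  have hc0 : 0 < c := by
    simp only [hc]; exact_mod_cast Finset.card_pos.2 hB
  set r : Fin n → ℝ := fun i => dotp (x i) β - y i with hr
  set S : ℝ := ∑ j, (g j)^2 with hS
  have hS0 : 0 ≤ S := Finset.sum_nonneg fun j _ => sq_nonneg _
  have e1 : S = (1/c) * ∑ i ∈ B, r i * dotp (x i) g := by
    rw [hS, Finset.mul_sum]
    have : ∀ i ∈ B, 1/c * (r i * dotp (x i) g) = ∑ j, (1/c * (r i * x i j)) * g j := by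
      intro i _
      rw [dotp, Finset.mul_sum, Finset.mul_sum]
      exact Finset.sum_congr rfl fun j _ => by ring
    rw [Finset.sum_congr rfl this, Finset.sum_comm]
    refine Finset.sum_congr rfl fun j _ => ?_
    rw [← Finset.sum_mul, sq]
    congr 1
    rw [hg, gradBatch, Finset.mul_sum]
  have e3 : ∑ i ∈ B, (dotp (x i) g)^2 = c * dotp (HBop x B g) g := by
    rw [dotp, Finset.mul_sum]
    have : ∀ j ∈ (univ : Finset (Fin d)), c * (HBop x B g j * g j)
        = ∑ i ∈ B, (dotp (x i) g * x i j) * g j := by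
      intro j _
      rw [HBop, ← hc, ← Finset.sum_mul]
      field_simp
    rw [Finset.sum_congr rfl this, Finset.sum_comm]
    refine (Finset.sum_congr rfl fun i _ => ?_).symm
    rw [sq, dotp, Finset.mul_sum]
    exact Finset.sum_congr rfl fun j _ => by ring
  have e4 : dotp (HBop x B g) g ≤ Lc * S := by
    calc dotp (HBop x B g) g ≤ norm2 (HBop x B g) * norm2 g := aux_dotp_le _ _ _
    _ ≤ (Lc * norm2 g) * norm2 g := by
        apply mul_le_mul_of_nonneg_right hH (Real.sqrt_nonneg _)
    _ = Lc * S := by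
        rw [mul_assoc, norm2, Real.mul_self_sqrt (Finset.sum_nonneg fun j _ => sq_nonneg _)]
  have e2 : (∑ i ∈ B, r i * dotp (x i) g)^2
      ≤ (∑ i ∈ B, (r i)^2) * (∑ i ∈ B, (dotp (x i) g)^2) :=
    Finset.sum_mul_sq_le_sq_mul_sq B r _
  have hrsum : ∑ i ∈ B, (r i)^2 = 2 * c * batchLoss x y B β := by
    rw [batchLoss]; field_simp
    simp only [hr, hc]; ring
  have hbl : 0 ≤ batchLoss x y B β := by
    rw [batchLoss]; positivity
  have hdsq : 0 ≤ ∑ i ∈ B, (dotp (x i) g)^2 := Finset.sum_nonneg fun i _ => sq_nonneg _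
  have key : S^2 ≤ 2 * Lc * batchLoss x y B β * S := by
    have h5 : S^2 = (1/c)^2 * (∑ i ∈ B, r i * dotp (x i) g)^2 := by rw [e1]; ring
    have h6 : ∑ i ∈ B, (dotp (x i) g)^2 ≤ c * (Lc * S) := by
      rw [e3]; exact mul_le_mul_of_nonneg_left e4 hc0.le
    calc S^2 = (1/c)^2 * (∑ i ∈ B, r i * dotp (x i) g)^2 := h5
    _ ≤ (1/c)^2 * ((∑ i ∈ B, (r i)^2) * (∑ i ∈ B, (dotp (x i) g)^2)) := by
        apply mul_le_mul_of_nonneg_left e2 (by positivity)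
    _ ≤ (1/c)^2 * ((2 * c * batchLoss x y B β) * (c * (Lc * S))) := by
        apply mul_le_mul_of_nonneg_left _ (by positivity)
        rw [hrsum]
        apply mul_le_mul_of_nonneg_left h6 (by positivity)
    _ = 2 * Lc * batchLoss x y B β * S := by field_simp
  rcases eq_or_lt_of_le hS0 with h0 | h0
  · rw [← h0]; positivity
  · nlinarith [key]

lemma aux_aPlus_pos {d n : ℕ} (x : Fin n → Fin d → ℝ) (y : Fin n → ℝ) (α : Fin d → ℝ)
    (hα : ∀ j, 0 < α j) (γ : ℕ → ℝ) (Bk : ℕ → Finset (Fin n)) (k : ℕ) (j : Fin d) :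
    0 < alphaPlusSq x y α γ Bk k j :=
  mul_pos (pow_pos (hα j) 2) (Real.exp_pos _)

lemma aux_aMinus_pos {d n : ℕ} (x : Fin n → Fin d → ℝ) (y : Fin n → ℝ) (α : Fin d → ℝ)
    (hα : ∀ j, 0 < α j) (γ : ℕ → ℝ) (Bk : ℕ → Finset (Fin n)) (k : ℕ) (j : Fin d) :
    0 < alphaMinusSq x y α γ Bk k j :=
  mul_pos (pow_pos (hα j) 2) (Real.exp_pos _)

lemma aux_aPlus_succ {d n : ℕ} (x : Fin n → Fin d → ℝ) (y : Fin n → ℝ) (α : Fin d → ℝ)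
    (γ : ℕ → ℝ) (Bk : ℕ → Finset (Fin n)) (k : ℕ) (j : Fin d) :
    alphaPlusSq x y α γ Bk (k+1) j
      = alphaPlusSq x y α γ Bk k j * Real.exp (-(qplus (γ k * gIter x y α γ Bk k j))) := by
  simp only [alphaPlusSq, Finset.sum_range_succ, neg_add, Real.exp_add, mul_assoc]

lemma aux_aMinus_succ {d n : ℕ} (x : Fin n → Fin d → ℝ) (y : Fin n → ℝ) (α : Fin d → ℝ)
    (γ : ℕ → ℝ) (Bk : ℕ → Finset (Fin n)) (k : ℕ) (j : Fin d) :
    alphaMinusSq x y α γ Bk (k+1) j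
      = alphaMinusSq x y α γ Bk k j * Real.exp (-(qminus (γ k * gIter x y α γ Bk k j))) := by
  simp only [alphaMinusSq, Finset.sum_range_succ, neg_add, Real.exp_add, mul_assoc]

lemma aux_alphaSq_pos {d n : ℕ} (x : Fin n → Fin d → ℝ) (y : Fin n → ℝ) (α : Fin d → ℝ)
    (hα : ∀ j, 0 < α j) (γ : ℕ → ℝ) (Bk : ℕ → Finset (Fin n)) (k : ℕ) (j : Fin d) :
    0 < alphaSq x y α γ Bk k j :=
  Real.sqrt_pos.2 (mul_pos (aux_aPlus_pos x y α hα γ Bk k j) (aux_aMinus_pos x y α hα γ Bk k j))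

lemma aux_alphaSq_succ {d n : ℕ} (x : Fin n → Fin d → ℝ) (y : Fin n → ℝ) (α : Fin d → ℝ)
    (hα : ∀ j, 0 < α j) (γ : ℕ → ℝ) (Bk : ℕ → Finset (Fin n)) (k : ℕ) (j : Fin d)
    (ht : |γ k * gIter x y α γ Bk k j| ≤ 1/2) :
    alphaSq x y α γ Bk (k+1) j
      = alphaSq x y α γ Bk k j * Real.exp (-(qfun (γ k * gIter x y α γ Bk k j))) := by
  have hP := aux_aPlus_pos x y α hα γ Bk k j
  have hM := aux_aMinus_pos x y α hα γ Bk k j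
  have hq := aux_qsum ht
  set t := γ k * gIter x y α γ Bk k j
  simp only [alphaSq]
  rw [aux_aPlus_succ, aux_aMinus_succ]
  rw [show alphaPlusSq x y α γ Bk k j * Real.exp (-(qplus t))
      * (alphaMinusSq x y α γ Bk k j * Real.exp (-(qminus t)))
      = (alphaPlusSq x y α γ Bk k j * alphaMinusSq x y α γ Bk k j)
        * (Real.exp (-(qfun t)))^2 by
    rw [sq, ← Real.exp_add, show -(qfun t) + -(qfun t) = -(qplus t) + -(qminus t) by linarith,
      Real.exp_add]; ring]
  rw [Real.sqrt_mul (mul_pos hP hM).le, Real.sqrt_sq (Real.exp_pos _).le]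

lemma aux_phi_log {d n : ℕ} (x : Fin n → Fin d → ℝ) (y : Fin n → ℝ) (α : Fin d → ℝ)
    (hα : ∀ j, 0 < α j) (γ : ℕ → ℝ) (Bk : ℕ → Finset (Fin n)) (k : ℕ) (j : Fin d) :
    phiK x y α γ Bk k j
      = Real.log (alphaPlusSq x y α γ Bk k j / alphaMinusSq x y α γ Bk k j) / 4 := by
  have hP := aux_aPlus_pos x y α hα γ Bk k j
  have hM := aux_aMinus_pos x y α hα γ Bk k j
  simp only [phiK, alphaSq]
  rw [aux_arsinh_ratio hP hM]
  ring

lemma aux_phi_diff {d n : ℕ} (x : Fin n → Fin d → ℝ) (y : Fin n → ℝ) (α : Fin d → ℝ)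
    (hα : ∀ j, 0 < α j) (γ : ℕ → ℝ) (Bk : ℕ → Finset (Fin n)) (k : ℕ) (j : Fin d) :
    phiK x y α γ Bk (k+1) j - phiK x y α γ Bk k j
      = (qminus (γ k * gIter x y α γ Bk k j) - qplus (γ k * gIter x y α γ Bk k j)) / 4 := by
  have hP := aux_aPlus_pos x y α hα γ Bk k j
  have hM := aux_aMinus_pos x y α hα γ Bk k j
  set t := γ k * gIter x y α γ Bk k j
  rw [aux_phi_log x y α hα γ Bk (k+1) j, aux_phi_log x y α hα γ Bk k j,
    aux_aPlus_succ, aux_aMinus_succ]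
  rw [Real.log_div (by positivity) (by positivity),
    Real.log_div hP.ne' hM.ne',
    Real.log_mul hP.ne' (Real.exp_ne_zero _),
    Real.log_mul hM.ne' (Real.exp_ne_zero _),
    Real.log_exp, Real.log_exp]
  ring

/-- bound on the variation of the potentials:
`|h_{k+1}(β) − h_k(β)| ≤ 8 L γ_k² L_{B_k}(β_k) ‖β‖_∞`. -/
theorem stmt12 (d n : ℕ) (x : Fin n → Fin d → ℝ) (y : Fin n → ℝ)
    (α : Fin d → ℝ) (hα : ∀ j, 0 < α j)
    (γ : ℕ → ℝ) (hγ : ∀ k, 0 ≤ γ k)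
    (Bk : ℕ → Finset (Fin n)) (hBk : ∀ k, (Bk k).Nonempty)
    (Lc : ℝ) (hLc : 0 < Lc)
    (hL : ∀ (k : ℕ) (β : Fin d → ℝ), norm2 (HBop x (Bk k) β) ≤ Lc * norm2 β ∧
      ‖HBop x (Bk k) β‖ ≤ Lc * ‖β‖)
    (k : ℕ) (hstep : ∀ ℓ, ℓ ≤ k → ∀ j, |γ ℓ * gIter x y α γ Bk ℓ j| ≤ 1 / 2) :
    ∀ β : Fin d → ℝ,
      |hK x y α γ Bk (k + 1) β - hK x y α γ Bk k β| ≤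
        8 * Lc * γ k ^ 2 * batchLoss x y (Bk k) (betaIter x y α γ Bk k) * ‖β‖ := by
  intro β
  have ht : ∀ j, |γ k * gIter x y α γ Bk k j| ≤ 1/2 := fun j => hstep k le_rfl j
  have hbl : 0 ≤ batchLoss x y (Bk k) (betaIter x y α γ Bk k) := by
    rw [batchLoss]; positivity
  have hgs : ∑ j, (gIter x y α γ Bk k j)^2
      ≤ 2 * Lc * batchLoss x y (Bk k) (betaIter x y α γ Bk k) :=
    aux_grad_sq d n x y (Bk k) (hBk k) (betaIter x y α γ Bk k) Lc hLc
      ((hL k (gradBatch x y (Bk k) (betaIter x y α γ Bk k))).1)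
  set a : Fin d → ℝ := alphaSq x y α γ Bk k with hadef
  set a' : Fin d → ℝ := alphaSq x y α γ Bk (k+1) with ha'def
  have hapos : ∀ j, 0 < a j := fun j => aux_alphaSq_pos x y α hα γ Bk k j
  have hsucc : ∀ j, a' j = a j * Real.exp (-(qfun (γ k * gIter x y α γ Bk k j))) :=
    fun j => aux_alphaSq_succ x y α hα γ Bk k j (ht j)
  have ha'pos : ∀ j, 0 < a' j := fun j => by
    rw [hsucc j]; exact mul_pos (hapos j) (Real.exp_pos _)
  have ha'le : ∀ j, a' j ≤ a j := fun j => by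
    rw [hsucc j]
    nlinarith [Real.exp_le_one_iff.2 (neg_nonpos.2 (aux_qfun_nonneg (ht j))),
      hapos j, Real.exp_pos (-(qfun (γ k * gIter x y α γ Bk k j)))]
  have main_eq : hK x y α γ Bk (k + 1) β - hK x y α γ Bk k β
      = ∑ j, (((β j * Real.arsinh (β j / a' j) - Real.sqrt ((β j)^2 + (a' j)^2) + a' j)/2
          - (β j * Real.arsinh (β j / a j) - Real.sqrt ((β j)^2 + (a j)^2) + a j)/2)
          - β j * ((qminus (γ k * gIter x y α γ Bk k j)
              - qplus (γ k * gIter x y α γ Bk k j))/4)) := by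
    simp only [hK, psiSq, dotp, Finset.mul_sum]
    rw [← Finset.sum_sub_distrib, ← Finset.sum_sub_distrib, ← Finset.sum_sub_distrib]
    refine Finset.sum_congr rfl fun j _ => ?_
    have hd := aux_phi_diff x y α hα γ Bk k j
    linear_combination (-(β j)) * hd
  rw [main_eq]
  have hterm : ∀ j ∈ (univ : Finset (Fin d)),
      |(((β j * Real.arsinh (β j / a' j) - Real.sqrt ((β j)^2 + (a' j)^2) + a' j)/2
          - (β j * Real.arsinh (β j / a j) - Real.sqrt ((β j)^2 + (a j)^2) + a j)/2)
          - β j * ((qminus (γ k * gIter x y α γ Bk k j)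
              - qplus (γ k * gIter x y α γ Bk k j))/4))|
      ≤ 2 * ‖β‖ * ((γ k)^2 * (gIter x y α γ Bk k j)^2) := by
    intro j _
    set t := γ k * gIter x y α γ Bk k j with htd
    have h1 : |(β j * Real.arsinh (β j / a' j) - Real.sqrt ((β j)^2 + (a' j)^2) + a' j)/2
        - (β j * Real.arsinh (β j / a j) - Real.sqrt ((β j)^2 + (a j)^2) + a j)/2|
        ≤ |β j| * (Real.exp (qfun t) - 1)/2 := by
      have hm := aux_mvt (β j) (a' j) (a j) (ha'pos j) (ha'le j)
      rw [abs_sub_comm] at hm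
      have hstep1 : a j - a' j = a' j * (Real.exp (qfun t) - 1) := by
        rw [hsucc j, Real.exp_neg]
        field_simp
        ring
      have heq : (|β j|/(2 * a' j)) * (a j - a' j)
          = |β j| * (Real.exp (qfun t) - 1)/2 := by
        rw [hstep1]
        field_simp [(ha'pos j).ne']
      rw [heq] at hm
      exact hm
    have h2 : |β j| * (Real.exp (qfun t) - 1)/2 ≤ |β j| * ((4/3)*t^2)/2 := by
      have hb := aux_exp_qfun_sub_one (ht j)
      rw [← htd] at hb
      nlinarith [abs_nonneg (β j)]
    have h3 : |β j * ((qminus t - qplus t)/4)| ≤ |β j| * t^2 := by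
      rw [abs_mul]
      exact mul_le_mul_of_nonneg_left (aux_delta_bound (ht j)) (abs_nonneg _)
    have h4 : |β j| ≤ ‖β‖ := by
      have := norm_le_pi_norm β j
      simpa [Real.norm_eq_abs] using this
    have htri := abs_sub
      ((β j * Real.arsinh (β j / a' j) - Real.sqrt ((β j)^2 + (a' j)^2) + a' j)/2
        - (β j * Real.arsinh (β j / a j) - Real.sqrt ((β j)^2 + (a j)^2) + a j)/2)
      (β j * ((qminus t - qplus t)/4))
    have hsq : t^2 = (γ k)^2 * (gIter x y α γ Bk k j)^2 := by rw [htd]; ring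
    rw [← hsq]
    nlinarith [sq_nonneg t, abs_nonneg (β j)]
  calc |∑ j, (((β j * Real.arsinh (β j / a' j) - Real.sqrt ((β j)^2 + (a' j)^2) + a' j)/2
          - (β j * Real.arsinh (β j / a j) - Real.sqrt ((β j)^2 + (a j)^2) + a j)/2)
          - β j * ((qminus (γ k * gIter x y α γ Bk k j)
              - qplus (γ k * gIter x y α γ Bk k j))/4))|
      ≤ ∑ j, |(((β j * Real.arsinh (β j / a' j) - Real.sqrt ((β j)^2 + (a' j)^2) + a' j)/2
          - (β j * Real.arsinh (β j / a j) - Real.sqrt ((β j)^2 + (a j)^2) + a j)/2)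
          - β j * ((qminus (γ k * gIter x y α γ Bk k j)
              - qplus (γ k * gIter x y α γ Bk k j))/4))| :=
      Finset.abs_sum_le_sum_abs _ _
    _ ≤ ∑ j, 2 * ‖β‖ * ((γ k)^2 * (gIter x y α γ Bk k j)^2) := Finset.sum_le_sum hterm
    _ = 2 * ‖β‖ * (γ k)^2 * ∑ j, (gIter x y α γ Bk k j)^2 := by
        rw [Finset.mul_sum]
        exact Finset.sum_congr rfl fun j _ => by ring
    _ ≤ 2 * ‖β‖ * (γ k)^2 * (2 * Lc * batchLoss x y (Bk k) (betaIter x y α γ Bk k)) := by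
        apply mul_le_mul_of_nonneg_left hgs (by positivity)
    _ ≤ 8 * Lc * γ k ^ 2 * batchLoss x y (Bk k) (betaIter x y α γ Bk k) * ‖β‖ := by
        nlinarith [mul_nonneg (mul_nonneg (mul_nonneg hLc.le (sq_nonneg (γ k))) hbl)
          (norm_nonneg β)]

end
end
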